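/- arXiv:2603.29973 — 5 statements merged into one kernel-verified Lean document; each statement's English description precedes it below -/
import Mathlib

section
/- The series \sum_{k=1}^{\infty} 1/(k^2 \binom{2k}{k}) converges to \pi^2/18, which equals \zeta(2)/3. -/
/-!
By the beta integral, `1 / (k ^ 2 * (2k choose k)) = (1 / k) ∫₀¹ x ^ (k - 1) (1 - x) ^ k dx`,
so the series sums to `∫₀¹ -log (1 - x (1 - x)) / x dx`.
Since `1 - x + x ^ 2 = (1 + x³) / (1 + x)`, the same integrand is also
`(log (1 + x) - log (1 + x³)) / x`; integrating its power series term by term gives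
`(1 - 1/3) ∑ (-1) ^ n / (n + 1) ^ 2 = (2/3) (π ^ 2 / 12) = π ^ 2 / 18`.
-/

open Real MeasureTheory Set
open scoped Nat

theorem hasSum_intervalIntegral_of_summable_integral_norm {ι E : Type*} [Countable ι]
    [NormedAddCommGroup E] [NormedSpace ℝ E] {a b : ℝ} (hab : a ≤ b) {f : ι → ℝ → E}
    {g : ℝ → E} (hf : ∀ i, IntervalIntegrable (f i) volume a b)
    (hsum : Summable fun i => ∫ x in a..b, ‖f i x‖)
    (hg : ∀ x ∈ Ioo a b, HasSum (f · x) (g x)) :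
    HasSum (fun i => ∫ x in a..b, f i x) (∫ x in a..b, g x) := by
  simp only [intervalIntegral.integral_of_le hab] at hsum ⊢
  have hg_ae : ∀ᵐ x ∂volume.restrict (Ioc a b), ∑' i, f i x = g x := by
    rw [← Measure.restrict_congr_set Ioo_ae_eq_Ioc]
    exact (ae_restrict_mem measurableSet_Ioo).mono fun x hx => (hg x hx).tsum_eq
  rw [← integral_congr_ae hg_ae]
  exact hasSum_integral_of_summable_integral_norm (fun i => (hf i).1) hsum

theorem integral_pow_mul_one_sub_pow (m n : ℕ) :
    ∫ x in (0 : ℝ)..1, x ^ m * (1 - x) ^ n = m ! * n ! / (m + n + 1)! := by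
  have hbeta : Complex.betaIntegral (m + 1) (n + 1) =
      ((∫ x in (0 : ℝ)..1, x ^ m * (1 - x) ^ n : ℝ) : ℂ) := by
    rw [Complex.betaIntegral, ← intervalIntegral.integral_ofReal]
    refine intervalIntegral.integral_congr fun x _ => ?_
    simp
  have hgamma := Complex.Gamma_mul_Gamma_eq_betaIntegral (s := m + 1) (t := n + 1)
    (by simp; positivity) (by simp; positivity)
  rw [hbeta, show (m : ℂ) + 1 + (n + 1) = ((m + n + 1 : ℕ) : ℂ) + 1 by push_cast; ring,
    Complex.Gamma_nat_eq_factorial, Complex.Gamma_nat_eq_factorial,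
    Complex.Gamma_nat_eq_factorial] at hgamma
  rw [eq_div_iff (by positivity)]
  exact_mod_cast (mul_comm _ _).trans hgamma.symm

theorem one_div_sq_mul_choose_eq_integral (n : ℕ) :
    1 / (((n + 1 : ℕ) : ℝ) ^ 2 * ((2 * (n + 1)).choose (n + 1) : ℝ)) =
      ∫ x in (0 : ℝ)..1, x ^ n * (1 - x) ^ (n + 1) / (n + 1) := by
  rw [intervalIntegral.integral_div, integral_pow_mul_one_sub_pow,
    Nat.cast_choose ℝ (by omega : n + 1 ≤ 2 * (n + 1)),
    show 2 * (n + 1) - (n + 1) = n + 1 by omega, show n + (n + 1) + 1 = 2 * (n + 1) by ring,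
    Nat.factorial_succ n]
  push_cast
  field_simp

theorem hasSum_pow_mul_one_sub_pow_div {x : ℝ} (hx : x ∈ Ioo 0 1) :
    HasSum (fun n : ℕ => x ^ n * (1 - x) ^ (n + 1) / (n + 1)) (-log (1 - x * (1 - x)) / x) := by
  obtain ⟨hx0, hx1⟩ := hx
  have hy : |x * (1 - x)| < 1 := by
    rw [abs_of_pos (by nlinarith)]; nlinarith
  refine ((hasSum_pow_div_log_of_abs_lt_one hy).div_const x).congr_fun fun n => ?_
  rw [mul_pow]
  field_simp
  ring

theorem hasSum_neg_one_pow_mul_sub_pow_div {x : ℝ} (hx : x ∈ Ioo 0 1) :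
    HasSum (fun n : ℕ => (-1) ^ n * (x ^ n - x ^ (3 * n + 2)) / (n + 1))
      (-log (1 - x * (1 - x)) / x) := by
  obtain ⟨hx0, hx1⟩ := hx
  have h1 : |-x| < 1 := by rwa [abs_neg, abs_of_pos hx0]
  have h3 : |-x ^ 3| < 1 := by
    rw [abs_neg, abs_of_pos (by positivity)]; exact pow_lt_one₀ hx0.le hx1 (by norm_num)
  have hlog : -log (1 - x * (1 - x)) = -log (1 - -x ^ 3) - -log (1 - -x) := by
    rw [show 1 - x * (1 - x) = (1 - -x ^ 3) / (1 - -x) by rw [eq_div_iff (by linarith)]; ring,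
      log_div (by nlinarith [pow_pos hx0 3]) (by linarith)]
    ring
  rw [hlog]
  refine (((hasSum_pow_div_log_of_abs_lt_one h3).sub
    (hasSum_pow_div_log_of_abs_lt_one h1)).div_const x).congr_fun fun n => ?_
  rw [neg_pow (x ^ 3), neg_pow x, ← pow_mul]
  field_simp
  ring

theorem integral_pow_sub_pow_div (n : ℕ) :
    ∫ x in (0 : ℝ)..1, (x ^ n - x ^ (3 * n + 2)) / (n + 1) = 2 / 3 / (n + 1) ^ 2 := by
  rw [intervalIntegral.integral_div, intervalIntegral.integral_sub
      (intervalIntegral.intervalIntegrable_pow _) (intervalIntegral.intervalIntegrable_pow _),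
    integral_pow, integral_pow]
  push_cast
  field_simp
  ring

theorem integral_norm_neg_one_pow_mul_sub_pow_div (n : ℕ) :
    ∫ x in (0 : ℝ)..1, ‖(-1) ^ n * (x ^ n - x ^ (3 * n + 2)) / (n + 1)‖ =
      2 / 3 / (n + 1) ^ 2 := by
  rw [← integral_pow_sub_pow_div]
  refine intervalIntegral.integral_congr fun x hx => ?_
  rw [uIcc_of_le zero_le_one] at hx
  have : x ^ (3 * n + 2) ≤ x ^ n := pow_le_pow_of_le_one hx.1 hx.2 (by omega)
  rw [norm_div, norm_mul, norm_pow, norm_neg, norm_one, one_pow, one_mul,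
    Real.norm_of_nonneg (by linarith), Real.norm_of_nonneg (by positivity)]

theorem integral_neg_one_pow_mul_sub_pow_div (n : ℕ) :
    ∫ x in (0 : ℝ)..1, (-1) ^ n * (x ^ n - x ^ (3 * n + 2)) / (n + 1) =
      (-1) ^ n * (2 / 3) / (n + 1) ^ 2 := by
  simp only [mul_div_assoc, intervalIntegral.integral_const_mul, integral_pow_sub_pow_div]

theorem hasSum_neg_one_pow_div_succ_sq :
    HasSum (fun n : ℕ => (-1 : ℝ) ^ n / ((n : ℝ) + 1) ^ 2) (π ^ 2 / 12) := by
  have h := hasSum_one_div_nat_pow_mul_cos one_ne_zero (x := 1 / 2) ⟨by norm_num, by norm_num⟩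
  have hcos (n : ℕ) : cos (2 * π * n * (1 / 2)) = (-1) ^ n := by
    rw [← cos_nat_mul_pi]; ring_nf
  simp only [hcos] at h
  rw [← bernoulliFun, mul_one, bernoulliFun_two] at h
  have h' := ((hasSum_nat_add_iff' 1).mpr h).neg
  norm_num [Finset.sum_range_one, Nat.factorial_two] at h'
  rw [show (2 * π) ^ 2 / 2 / 2 * (1 / 12) = π ^ 2 / 12 by ring] at h'
  exact h'.congr_fun fun n => by ring

theorem summable_one_div_succ_sq : Summable fun n : ℕ => 1 / ((n : ℝ) + 1) ^ 2 := by
  simpa using (summable_nat_add_iff 1).mpr hasSum_zeta_two.summable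

theorem hasSum_one_div_sq_mul_choose_integral_log :
    HasSum (fun n : ℕ => 1 / (((n + 1 : ℕ) : ℝ) ^ 2 * ((2 * (n + 1)).choose (n + 1) : ℝ)))
      (∫ x in (0 : ℝ)..1, -log (1 - x * (1 - x)) / x) := by
  simp only [one_div_sq_mul_choose_eq_integral]
  refine hasSum_intervalIntegral_of_summable_integral_norm zero_le_one
    (fun n => (by fun_prop : Continuous _).intervalIntegrable _ _) ?_
    fun x hx => hasSum_pow_mul_one_sub_pow_div hx
  refine summable_one_div_succ_sq.of_nonneg_of_le
    (fun n => intervalIntegral.integral_nonneg zero_le_one fun x _ => norm_nonneg _) fun n => ?_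
  have hnorm : ∫ x in (0 : ℝ)..1, ‖x ^ n * (1 - x) ^ (n + 1) / (n + 1)‖ =
      1 / (((n + 1 : ℕ) : ℝ) ^ 2 * ((2 * (n + 1)).choose (n + 1) : ℝ)) := by
    rw [one_div_sq_mul_choose_eq_integral]
    refine intervalIntegral.integral_congr fun x hx => ?_
    rw [uIcc_of_le zero_le_one] at hx
    obtain ⟨hx0, hx1⟩ := hx
    have : 0 ≤ 1 - x := by linarith
    exact Real.norm_of_nonneg (by positivity)
  have hchoose : (1 : ℝ) ≤ (2 * (n + 1)).choose (n + 1) := by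
    exact_mod_cast Nat.choose_pos (by omega)
  rw [hnorm]
  push_cast
  exact one_div_le_one_div_of_le (by positivity) (le_mul_of_one_le_right (by positivity) hchoose)

theorem hasSum_neg_one_pow_div_sq_integral_log :
    HasSum (fun n : ℕ => (-1) ^ n * (2 / 3) / ((n : ℝ) + 1) ^ 2)
      (∫ x in (0 : ℝ)..1, -log (1 - x * (1 - x)) / x) := by
  simp only [← integral_neg_one_pow_mul_sub_pow_div]
  refine hasSum_intervalIntegral_of_summable_integral_norm zero_le_one
    (fun n => (by fun_prop : Continuous _).intervalIntegrable _ _) ?_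
    fun x hx => hasSum_neg_one_pow_mul_sub_pow_div hx
  simp only [integral_norm_neg_one_pow_mul_sub_pow_div]
  exact (summable_one_div_succ_sq.mul_left (2 / 3)).congr fun n => by ring

theorem stmt_2 :
    HasSum (fun k : ℕ =>
      1 / (((k + 1 : ℕ) : ℝ) ^ 2 * (Nat.choose (2 * (k + 1)) (k + 1) : ℝ)))
      (π ^ 2 / 18) ∧
    ((π ^ 2 / 18 : ℝ) : ℂ) = riemannZeta 2 / 3 := by
  have halt : HasSum (fun n : ℕ => (-1) ^ n * (2 / 3) / ((n : ℝ) + 1) ^ 2) (π ^ 2 / 18) := by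
    rw [show π ^ 2 / 18 = 2 / 3 * (π ^ 2 / 12) by ring]
    exact (hasSum_neg_one_pow_div_succ_sq.mul_left (2 / 3)).congr_fun fun n => by ring
  have hintegral := hasSum_neg_one_pow_div_sq_integral_log.unique halt
  refine ⟨hintegral ▸ hasSum_one_div_sq_mul_choose_integral_log, ?_⟩
  rw [riemannZeta_two]
  push_cast
  ring
end

section
/- The alternating series \sum_{k=1}^{\infty} (-1)^k/(k^3 \binom{2k}{k}) converges to -\frac{2}{5}\zeta(3). -/
/-!
Apéry's telescoping argument, as told by van der Poorten. Put
`ε n = ∑_{k=1}^n (-1)^(k+1) / (2 k^3 (n choose k) ((n+k) choose k))`. The summand of `ε` and an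
explicit certificate form a Wilf–Zeilberger pair, so `ε (n+1) - ε n` telescopes to boundary terms,
which evaluate to `-(5/2)` times the `(n+1)`-st term of the series minus `1/(n+1)^3`. Hence the
`N`-th partial sum of the series is `-(2/5) (∑_{n ≤ N} 1/n^3 + ε N)`, and `ε N = O(1/N)` because
`((n+k) choose k) ≥ n + 1` for `k ≥ 1`.
-/

open Finset Filter Topology
open scoped Nat

theorem Finset.Nat.sum_antidiagonal_sub {M : Type*} [AddCommGroup M] (f : ℕ → ℕ → M) (n : ℕ) :
    ∑ p ∈ antidiagonal n, (f (p.1 + 1) p.2 - f p.1 (p.2 + 1)) = f (n + 1) 0 - f 0 (n + 1) := by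
  have h := Nat.sum_antidiagonal_succ (f := fun p => f p.1 p.2) (n := n)
  rw [Nat.sum_antidiagonal_succ'] at h
  rw [sum_sub_distrib]
  exact sub_eq_sub_iff_add_eq_add.mpr (by rw [add_comm, ← h, add_comm])

theorem Nat.add_two_mul_factorial_sq_mul_factorial_le (i d : ℕ) :
    (i + d + 2) * ((i + 1)! ^ 2 * d !) ≤ (2 * i + d + 2)! := by
  have hchoose : i + d + 2 ≤ (2 * i + d + 2).choose (i + 1) := calc
    i + d + 2 = (i + d + 2).choose (i + d + 1) := (Nat.choose_succ_self_right _).symm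
    _ ≤ (i + d + 1 + (i + 1)).choose (i + d + 1) := Nat.choose_le_choose _ (by omega)
    _ = (2 * i + d + 2).choose (i + 1) := by rw [Nat.choose_symm_add]; ring_nf
  have hfact : (i + 1)! * d ! ≤ (i + d + 1)! := by
    have := Nat.factorial_mul_factorial_dvd_factorial_add (i + 1) d
    rw [show i + 1 + d = i + d + 1 by ring] at this
    exact Nat.le_of_dvd (Nat.factorial_pos _) this
  calc (i + d + 2) * ((i + 1)! ^ 2 * d !) = (i + d + 2) * ((i + 1)! * d !) * (i + 1)! := by ring
    _ ≤ (2 * i + d + 2).choose (i + 1) * (i + d + 1)! * (i + 1)! := by gcongr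
    _ = (2 * i + d + 2)! := by
      have := Nat.add_choose_mul_factorial_mul_factorial (i + d + 1) (i + 1)
      rwa [show i + d + 1 + (i + 1) = 2 * i + d + 2 by ring] at this

namespace Apery

noncomputable def term (k : ℕ) : ℝ :=
  (-1 : ℝ) ^ (k + 1) / (((k + 1 : ℕ) : ℝ) ^ 3 * (Nat.choose (2 * (k + 1)) (k + 1) : ℝ))

theorem abs_term_le (k : ℕ) : |term k| ≤ 1 / ((k : ℝ) + 1) ^ 3 := by
  have hchoose : (1 : ℝ) ≤ (2 * (k + 1)).choose (k + 1) := by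
    exact_mod_cast Nat.choose_pos (by omega)
  rw [term, abs_div, abs_pow, abs_neg, abs_one, one_pow, abs_of_pos (by positivity),
    Nat.cast_add_one]
  gcongr
  exact le_mul_of_one_le_right (by positivity) hchoose

theorem summable_one_div_add_one_pow_three : Summable fun n : ℕ => 1 / ((n : ℝ) + 1) ^ 3 := by
  simpa [Nat.cast_add, Nat.cast_one] using
    (summable_nat_add_iff 1).mpr (Real.summable_one_div_nat_pow.mpr (by norm_num : 1 < 3))

theorem summable_term : Summable term :=
  summable_one_div_add_one_pow_three.of_norm_bounded abs_term_le

/-- `remainderTerm (k - 1) (n - k) = (-1) ^ (k + 1) / (2 k ^ 3 (n choose k) ((n + k) choose k))`;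
indexing by `d = n - k` keeps natural subtraction out of the factorials. -/
noncomputable def remainderTerm (i d : ℕ) : ℝ :=
  (-1) ^ i * ((i + 1)! : ℝ) ^ 2 * d ! / (2 * ((i : ℝ) + 1) ^ 3 * (2 * i + d + 2)!)

noncomputable def certificate (i d : ℕ) : ℝ :=
  (-1) ^ i * (i ! : ℝ) ^ 2 * d ! / (((i : ℝ) + d + 1) ^ 2 * (2 * i + d + 1)!)

theorem remainderTerm_succ_sub (i d : ℕ) :
    remainderTerm i (d + 1) - remainderTerm i d =
      certificate (i + 1) d - certificate i (d + 1) := by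
  simp only [remainderTerm, certificate]
  rw [show 2 * (i + 1) + d + 1 = 2 * i + d + 2 + 1 by ring,
    show 2 * i + (d + 1) + 2 = 2 * i + d + 2 + 1 by ring,
    show 2 * i + (d + 1) + 1 = 2 * i + d + 2 by ring]
  simp only [Nat.factorial_succ]
  push_cast
  field_simp
  ring

theorem certificate_sub_add_remainderTerm (m : ℕ) :
    certificate m 0 - certificate 0 m + remainderTerm m 0 =
      -(5 / 2) * term m - 1 / ((m : ℝ) + 1) ^ 3 := by
  have hchoose := Nat.add_choose_mul_factorial_mul_factorial (m + 1) (m + 1)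
  rw [show m + 1 + (m + 1) = 2 * (m + 1) by ring] at hchoose
  have hc : ((2 * (m + 1)).choose (m + 1) : ℝ) = (2 * m + 2)! / ((m + 1)! : ℝ) ^ 2 := by
    rw [eq_div_iff (by positivity), show 2 * m + 2 = 2 * (m + 1) by ring, ← hchoose]
    push_cast; ring
  simp only [certificate, remainderTerm, term, hc]
  rw [show 2 * 0 + m + 1 = m + 1 by ring, show 2 * m + 0 + 1 = 2 * m + 1 by ring,
    show 2 * m + 0 + 2 = 2 * m + 1 + 1 by ring]
  simp only [Nat.factorial_succ]
  push_cast
  field_simp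
  ring

noncomputable def remainder (n : ℕ) : ℝ := ∑ k ∈ range n, remainderTerm k (n - 1 - k)

theorem remainder_succ (n : ℕ) :
    remainder (n + 1) = ∑ p ∈ antidiagonal n, remainderTerm p.1 p.2 := by
  rw [Nat.sum_antidiagonal_eq_sum_range_succ remainderTerm, remainder, Nat.add_sub_cancel]

theorem remainder_succ_sub (m : ℕ) :
    remainder (m + 1) - remainder m = -(5 / 2) * term m - 1 / ((m : ℝ) + 1) ^ 3 := by
  rw [← certificate_sub_add_remainderTerm]
  cases m with
  | zero => simp [remainder]
  | succ n =>
    rw [remainder_succ, remainder_succ, Nat.sum_antidiagonal_succ', add_sub_assoc,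
      ← sum_sub_distrib]
    simp only [remainderTerm_succ_sub]
    rw [Nat.sum_antidiagonal_sub]
    ring

theorem term_eq_remainder_sub (k : ℕ) :
    term k = -(2 / 5) * (1 / ((k : ℝ) + 1) ^ 3 + (remainder (k + 1) - remainder k)) := by
  rw [remainder_succ_sub]; ring

theorem sum_range_term (n : ℕ) :
    ∑ k ∈ range n, term k = -(2 / 5) * (∑ k ∈ range n, 1 / ((k : ℝ) + 1) ^ 3 + remainder n) := by
  simp only [term_eq_remainder_sub, ← mul_sum, sum_add_distrib, sum_range_sub (f := remainder)]
  simp [remainder]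

theorem abs_remainderTerm_le (i d : ℕ) :
    |remainderTerm i d| ≤ 1 / ((i : ℝ) + 1) ^ 3 / (2 * (i + d + 2 : ℕ)) := by
  have h : ((i + d + 2 : ℕ) : ℝ) * (((i + 1)! : ℝ) ^ 2 * d !) ≤ (2 * i + d + 2)! := by
    exact_mod_cast Nat.add_two_mul_factorial_sq_mul_factorial_le i d
  rw [remainderTerm, abs_div, abs_mul, abs_mul, abs_pow, abs_neg, abs_one, one_pow, one_mul,
    abs_of_nonneg (by positivity), abs_of_nonneg (by positivity), abs_of_pos (by positivity),
    div_div, div_le_div_iff₀ (by positivity) (by positivity)]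
  calc ((i + 1)! : ℝ) ^ 2 * d ! * (((i : ℝ) + 1) ^ 3 * (2 * (i + d + 2 : ℕ)))
      = 2 * ((i : ℝ) + 1) ^ 3 * (((i + d + 2 : ℕ) : ℝ) * (((i + 1)! : ℝ) ^ 2 * d !)) := by ring
    _ ≤ 2 * ((i : ℝ) + 1) ^ 3 * (2 * i + d + 2)! := by gcongr
    _ = 1 * (2 * ((i : ℝ) + 1) ^ 3 * (2 * i + d + 2)!) := by ring

theorem abs_remainder_le (n : ℕ) :
    |remainder n| ≤ (∑' k : ℕ, 1 / ((k : ℝ) + 1) ^ 3) / (2 * (n + 1)) := calc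
  |remainder n| ≤ ∑ k ∈ range n, |remainderTerm k (n - 1 - k)| := abs_sum_le_sum_abs _ _
  _ ≤ ∑ k ∈ range n, 1 / ((k : ℝ) + 1) ^ 3 / (2 * (n + 1)) := by
    refine sum_le_sum fun k hk => ?_
    have hn : k + (n - 1 - k) + 2 = n + 1 := by have := mem_range.mp hk; omega
    simpa [hn] using abs_remainderTerm_le k (n - 1 - k)
  _ ≤ (∑' k : ℕ, 1 / ((k : ℝ) + 1) ^ 3) / (2 * (n + 1)) := by
    rw [← sum_div]
    gcongr
    exact summable_one_div_add_one_pow_three.sum_le_tsum _ (fun k _ => by positivity)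

theorem tendsto_remainder : Tendsto remainder atTop (𝓝 0) := by
  have h := (tendsto_one_div_add_atTop_nhds_zero_nat (𝕜 := ℝ)).const_mul
    ((∑' k : ℕ, 1 / ((k : ℝ) + 1) ^ 3) / 2)
  rw [mul_zero] at h
  exact squeeze_zero_norm (fun n => (abs_remainder_le n).trans_eq (by rw [mul_one_div, div_div])) h

end Apery

theorem stmt_5 :
    HasSum (fun k : ℕ =>
      (-1 : ℝ) ^ (k + 1) /
        (((k + 1 : ℕ) : ℝ) ^ 3 * (Nat.choose (2 * (k + 1)) (k + 1) : ℝ)))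
      (-(2 / 5) * ∑' n : ℕ, 1 / ((n : ℝ) + 1) ^ 3) := by
  refine Apery.summable_term.hasSum_iff_tendsto_nat.mpr ?_
  simp_rw [Apery.sum_range_term]
  simpa using (Apery.summable_one_div_add_one_pow_three.hasSum.tendsto_sum_nat.add
    Apery.tendsto_remainder).const_mul (-(2 / 5))
end

section
/- Zeilberger's series identity: \sum_{k=1}^{\infty} (21k-8)/(k^3 \binom{2k}{k}^3) = \pi^2/6. -/
/-!
`F n k = n!⁴ (n+k)!² / ((2n)! (2n+k+1)!²)` and `G = R F` form a Wilf–Zeilberger pair: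
`F n k - F (n+1) k = G n k - G n (k+1)`. Summing this over `k` gives
`∑ₖ F n k - ∑ₖ F (n+1) k = G n 0`, because `G n k → 0` as `k → ∞`; summing over `n`,
and using `∑ₖ F n k → 0`, gives `∑ₙ G n 0 = ∑ₖ F 0 k = ∑ₖ 1/(k+1)² = π²/6`.
Finally `G n 0` is the `(n+1)`-st term of Zeilberger's series.
-/

open Real Filter Finset Nat Topology

theorem tendsto_sum_of_wz_pair {E : Type*} [AddCommGroup E] [TopologicalSpace E]
    [IsTopologicalAddGroup E] [T2Space E] {F G : ℕ → ℕ → E} {S : ℕ → E}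
    (hF : ∀ n, HasSum (F n) (S n)) (hwz : ∀ n k, F n k - F (n + 1) k = G n k - G n (k + 1))
    (hG : ∀ n, Tendsto (G n) atTop (𝓝 0)) (hS : Tendsto S atTop (𝓝 0)) :
    Tendsto (fun N ↦ ∑ n ∈ range N, G n 0) atTop (𝓝 (S 0)) := by
  have hrow (n : ℕ) : S n - S (n + 1) = G n 0 := by
    refine tendsto_nhds_unique ((hF n).sub (hF (n + 1))).tendsto_sum_nat ?_
    simp_rw [hwz, sum_range_sub']
    simpa using tendsto_const_nhds.sub (hG n)
  simp_rw [← hrow, sum_range_sub']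
  simpa using tendsto_const_nhds.sub hS

namespace Zeilberger

noncomputable def F (n k : ℕ) : ℝ :=
  (n ! : ℝ) ^ 4 * ((n + k)! : ℝ) ^ 2 / ((2 * n)! * ((2 * n + k + 1)! : ℝ) ^ 2)

/-- The numerator of the WZ certificate `R = G / F`, as produced by Zeilberger's algorithm. -/
def q (n k : ℕ) : ℝ :=
  84 * n ^ 5 + 196 * n ^ 4 * k + 304 * n ^ 4 + 185 * n ^ 3 * k ^ 2 + 566 * n ^ 3 * k
  + 429 * n ^ 3 + 88 * n ^ 2 * k ^ 3 + 399 * n ^ 2 * k ^ 2 + 598 * n ^ 2 * k + 295 * n ^ 2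
  + 21 * n * k ^ 4 + 126 * n * k ^ 3 + 280 * n * k ^ 2 + 274 * n * k + 99 * n
  + 2 * k ^ 5 + 15 * k ^ 4 + 44 * k ^ 3 + 64 * k ^ 2 + 46 * k + 13

noncomputable def R (n k : ℕ) : ℝ :=
  q n k / (2 * (2 * n + 1) * (2 * n + k + 1) ^ 2 * (2 * n + k + 2) ^ 2)

noncomputable def G (n k : ℕ) : ℝ := R n k * F n k

lemma q_nonneg (n k : ℕ) : 0 ≤ q n k := by unfold q; positivity

lemma q_le (n k : ℕ) : q n k ≤ 600 * ((n : ℝ) + 1) ^ 5 * ((k : ℝ) + 1) ^ 5 := by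
  -- no coefficient of `q` exceeds 600, so the difference has nonnegative coefficients
  rw [← sub_nonneg]
  unfold q
  ring_nf
  positivity

lemma R_nonneg (n k : ℕ) : 0 ≤ R n k := by
  have := q_nonneg n k
  unfold R; positivity

lemma F_nonneg (n k : ℕ) : 0 ≤ F n k := by unfold F; positivity

lemma G_nonneg (n k : ℕ) : 0 ≤ G n k := mul_nonneg (R_nonneg n k) (F_nonneg n k)

lemma F_succ_left (n k : ℕ) :
    F (n + 1) k = (n + 1) ^ 4 * (n + k + 1) ^ 2 /
      ((2 * n + 1) * (2 * n + 2) * (2 * n + k + 2) ^ 2 * (2 * n + k + 3) ^ 2) * F n k := by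
  rw [F, F, show n + 1 + k = n + k + 1 by ring, show 2 * (n + 1) = 2 * n + 1 + 1 by ring,
    show 2 * n + 1 + 1 + k + 1 = 2 * n + k + 1 + 1 + 1 by ring]
  simp only [factorial_succ]
  push_cast
  field_simp
  ring

lemma F_succ_right (n k : ℕ) :
    F n (k + 1) = ((n + k + 1) / (2 * n + k + 2)) ^ 2 * F n k := by
  rw [F, F, ← add_assoc, show 2 * n + (k + 1) + 1 = 2 * n + k + 1 + 1 by ring]
  simp only [factorial_succ]
  push_cast
  field_simp
  ring

lemma wz_certificate (n k : ℕ) :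
    1 - (n + 1) ^ 4 * (n + k + 1) ^ 2 /
      ((2 * n + 1) * (2 * n + 2) * (2 * n + k + 2) ^ 2 * (2 * n + k + 3) ^ 2) =
    R n k - R n (k + 1) * ((n + k + 1) / (2 * n + k + 2)) ^ 2 := by
  simp only [R, q]
  push_cast
  field_simp
  ring

lemma wz_identity (n k : ℕ) : F n k - F (n + 1) k = G n k - G n (k + 1) := by
  rw [G, G, F_succ_left, F_succ_right]
  linear_combination F n k * wz_certificate n k


lemma F_zero_left (k : ℕ) : F 0 k = 1 / ((k : ℝ) + 1) ^ 2 := by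
  simp only [F, mul_zero, zero_add, factorial_zero, factorial_succ]
  push_cast
  field_simp

lemma F_zero_right (n : ℕ) : F n 0 = 1 / ((2 * n + 1) ^ 2 * (centralBinom n : ℝ) ^ 3) := by
  have hc : (centralBinom n : ℝ) * n ! * n ! = (2 * n)! := by
    rw [centralBinom_eq_two_mul_choose, two_mul]
    exact_mod_cast add_choose_mul_factorial_mul_factorial n n
  rw [F, add_zero, factorial_succ]
  push_cast
  rw [← hc]
  field_simp

lemma F_le_div (n k : ℕ) : F n k ≤ F n 0 / ((k : ℝ) + 1) ^ 2 := by
  induction k with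
  | zero => simp
  | succ k ih =>
    have hratio : ((n + k + 1) / (2 * n + k + 2) : ℝ) ≤ (k + 1) / (k + 2) := by
      rw [div_le_div_iff₀ (by positivity) (by positivity)]
      have hnk : (0 : ℝ) ≤ n * k := by positivity
      nlinarith
    calc F n (k + 1) = ((n + k + 1) / (2 * n + k + 2)) ^ 2 * F n k := F_succ_right n k
      _ ≤ ((k + 1) / (k + 2)) ^ 2 * (F n 0 / ((k : ℝ) + 1) ^ 2) := by
        gcongr
        · exact F_nonneg n k
      _ = F n 0 / (((k + 1 : ℕ) : ℝ) + 1) ^ 2 := by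
        push_cast
        field_simp
        ring

lemma hasSum_F_zero_left : HasSum (F 0) (π ^ 2 / 6) := by
  have := (hasSum_nat_add_iff (f := fun n : ℕ ↦ 1 / (n : ℝ) ^ 2) 1).mpr
    (by simpa using hasSum_zeta_two)
  refine this.congr_fun fun k ↦ ?_
  rw [F_zero_left]
  push_cast
  ring

lemma summable_F (n : ℕ) : Summable (F n) := by
  refine Summable.of_nonneg_of_le (F_nonneg n) (F_le_div n) ?_
  simp_rw [div_eq_mul_one_div (F n 0), ← F_zero_left]
  exact hasSum_F_zero_left.summable.mul_left _


lemma F_zero_right_le (n : ℕ) : F n 0 ≤ 1 / ((n : ℝ) + 1) := by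
  rw [F_zero_right]
  gcongr
  have hc : (1 : ℝ) ≤ centralBinom n := by exact_mod_cast centralBinom_pos n
  nlinarith [one_le_pow₀ (n := 3) hc]

lemma tendsto_tsum_F : Tendsto (fun n ↦ ∑' k, F n k) atTop (𝓝 0) := by
  have hle (n : ℕ) : ∑' k, F n k ≤ 1 / ((n : ℝ) + 1) * (π ^ 2 / 6) :=
    calc ∑' k, F n k ≤ ∑' k, F n 0 * F 0 k := by
          refine (summable_F n).tsum_le_tsum (fun k ↦ ?_) (hasSum_F_zero_left.summable.mul_left _)
          rw [F_zero_left, ← div_eq_mul_one_div]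
          exact F_le_div n k
      _ = F n 0 * (π ^ 2 / 6) := (hasSum_F_zero_left.mul_left _).tsum_eq
      _ ≤ 1 / ((n : ℝ) + 1) * (π ^ 2 / 6) := by gcongr; exact F_zero_right_le n
  refine squeeze_zero (fun n ↦ tsum_nonneg (F_nonneg n)) hle ?_
  simpa only [zero_mul] using
    (tendsto_one_div_add_atTop_nhds_zero_nat (𝕜 := ℝ)).mul_const (π ^ 2 / 6)

lemma R_le (n k : ℕ) : R n k ≤ 300 * ((n : ℝ) + 1) ^ 5 * ((k : ℝ) + 1) := by
  rw [R, div_le_iff₀ (by positivity)]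
  calc q n k ≤ 600 * ((n : ℝ) + 1) ^ 5 * ((k : ℝ) + 1) ^ 5 := q_le n k
    _ = 300 * ((n : ℝ) + 1) ^ 5 * ((k : ℝ) + 1) *
          (2 * 1 * ((k : ℝ) + 1) ^ 2 * ((k : ℝ) + 1) ^ 2) := by ring
    _ ≤ _ := by gcongr <;> linarith [(Nat.cast_nonneg n : (0 : ℝ) ≤ n)]

lemma tendsto_G (n : ℕ) : Tendsto (G n) atTop (𝓝 0) := by
  have hle (k : ℕ) : G n k ≤ 300 * ((n : ℝ) + 1) ^ 5 * F n 0 * (1 / ((k : ℝ) + 1)) :=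
    calc G n k ≤ 300 * ((n : ℝ) + 1) ^ 5 * ((k : ℝ) + 1) * (F n 0 / ((k : ℝ) + 1) ^ 2) :=
          mul_le_mul (R_le n k) (F_le_div n k) (F_nonneg n k) (by positivity)
      _ = 300 * ((n : ℝ) + 1) ^ 5 * F n 0 * (1 / ((k : ℝ) + 1)) := by field_simp
  refine squeeze_zero (G_nonneg n) hle ?_
  simpa only [mul_zero] using
    (tendsto_one_div_add_atTop_nhds_zero_nat (𝕜 := ℝ)).const_mul
      (300 * ((n : ℝ) + 1) ^ 5 * F n 0)

lemma G_zero_right (n : ℕ) :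
    G n 0 = (21 * ((n + 1 : ℕ) : ℝ) - 8) /
      (((n + 1 : ℕ) : ℝ) ^ 3 * (Nat.choose (2 * (n + 1)) (n + 1) : ℝ) ^ 3) := by
  have hc : ((n + 1 : ℕ) : ℝ) * centralBinom (n + 1) = 2 * (2 * n + 1) * centralBinom n := by
    exact_mod_cast succ_mul_centralBinom_succ n
  have hc0 : (centralBinom n : ℝ) ≠ 0 := by exact_mod_cast centralBinom_ne_zero n
  rw [← centralBinom_eq_two_mul_choose, ← mul_pow, hc, G, F_zero_right, R, q]
  push_cast
  field_simp
  ring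

end Zeilberger

open Zeilberger in
theorem stmt_7 :
    HasSum (fun k : ℕ =>
      (21 * ((k + 1 : ℕ) : ℝ) - 8) /
        (((k + 1 : ℕ) : ℝ) ^ 3 * (Nat.choose (2 * (k + 1)) (k + 1) : ℝ) ^ 3))
      (π ^ 2 / 6) := by
  simp_rw [← G_zero_right]
  rw [hasSum_iff_tendsto_nat_of_nonneg (G_nonneg · 0), ← hasSum_F_zero_left.tsum_eq]
  exact tendsto_sum_of_wz_pair (fun n ↦ (summable_F n).hasSum) wz_identity tendsto_G
    tendsto_tsum_F
end

section
/- For every real number x with -2 \le x \le 2, one has (\arcsin(x/2))^4 = \frac{3}{2} \sum_{k=1}^{\infty} \frac{H_{k-1}^{(2)}}{k^2 \binom{2k}{k}} x^{2k}, where H_n^{(2)} = \sum_{j=1}^{n} 1/j^2. -/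
/-!
Write `f x = arcsin (x / 2)` and `σ x = √(4 - x²)`. Since `σ f' = 1`, every power satisfies
`σ (σ (f ^ (n + 2))')' = (n + 2) (n + 1) f ^ n`. For the series
`S_s x = ∑ s_k x^(2k+2) / ((k+1)² C(2k+2, k+1))`, the recurrence
`(k + 2) C(2k+4, k+2) = 2 (2k + 3) C(2k+2, k+1)` gives `σ (σ S_s')' = 4 s₀ + 4 S_t` whenever
`s_(k+1) - s_k = t_k / (k+1)²`. Both sides vanish to first order at `0`, so this second-order
equation identifies `S_(1/2)` with `f²`, and then (taking `t = 3/2`, so that `4 S_t = 12 f²`)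
`S_(3/2 H⁽²⁾)` with `f⁴` on `(-2, 2)`.
At `x = ±2` the terms are nonnegative, and the series converges to the left limit `f(2)⁴`.
-/

/-- The `n`-th harmonic number of order 2: `H_n^{(2)} = ∑_{j=1}^n 1/j^2`. -/
noncomputable def harmonic2 (n : ℕ) : ℝ := ∑ j ∈ Finset.range n, 1 / ((j : ℝ) + 1) ^ 2

open Real Set Filter Topology

lemma summable_succ_pow_mul_geometric (N : ℕ) {ρ : ℝ} (hρ : |ρ| < 1) :
    Summable fun k : ℕ => ((k : ℝ) + 1) ^ N * ρ ^ k := by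
  rcases eq_or_ne ρ 0 with rfl | hρ0
  · exact (summable_nat_add_iff 1).1 (by simp)
  · have h := (summable_nat_add_iff 1).2
      (summable_pow_mul_geometric_of_norm_lt_one (R := ℝ) N (by rwa [Real.norm_eq_abs]))
    refine (h.mul_left ρ⁻¹).congr fun k => ?_
    simp only [Nat.cast_add, Nat.cast_one, pow_succ]
    field_simp

theorem hasDerivAt_tsum_mul_pow_succ {c : ℕ → ℝ} {n : ℕ → ℕ} {r x : ℝ}
    (hc : Summable fun k => c k * ((n k : ℝ) + 1) * r ^ n k) (hx : |x| < r) :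
    HasDerivAt (fun y => ∑' k, c k * y ^ (n k + 1))
      (∑' k, c k * ((n k : ℝ) + 1) * x ^ n k) x := by
  have hr : 0 < r := (abs_nonneg x).trans_lt hx
  refine hasDerivAt_tsum_of_isPreconnected (g := fun k y => c k * y ^ (n k + 1))
    (g' := fun k y => c k * ((n k : ℝ) + 1) * y ^ n k) (t := Ioo (-r) r) (y₀ := 0) hc.abs
    isOpen_Ioo (convex_Ioo (-r) r).isPreconnected (fun k y _ => ?_) (fun k y hy => ?_)
    ⟨by linarith, hr⟩ (by simp) (abs_lt.1 hx)
  · simpa [mul_assoc] using (hasDerivAt_pow (n k + 1) y).const_mul (c k)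
  · have hy : |y| ≤ r := (abs_lt.2 hy).le
    simp only [Real.norm_eq_abs, abs_mul, abs_pow, abs_of_pos hr]
    gcongr

theorem eqOn_of_hasDerivAt_mul_deriv {s : Set ℝ} (hs : IsOpen s) (hs' : IsPreconnected s)
    {x₀ : ℝ} (hx₀ : x₀ ∈ s) {g F Φ F' Φ' R : ℝ → ℝ} (hg : ∀ x ∈ s, g x ≠ 0)
    (hF : ∀ x ∈ s, HasDerivAt F (F' x) x) (hΦ : ∀ x ∈ s, HasDerivAt Φ (Φ' x) x)
    (hgF : ∀ x ∈ s, HasDerivAt (fun y => g y * F' y) (R x) x)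
    (hgΦ : ∀ x ∈ s, HasDerivAt (fun y => g y * Φ' y) (R x) x)
    (h₀ : F x₀ = Φ x₀) (h₀' : F' x₀ = Φ' x₀) : EqOn F Φ s := by
  have hgF' : EqOn (fun y => g y * F' y) (fun y => g y * Φ' y) s :=
    hs.eqOn_of_deriv_eq hs' (fun x hx => (hgF x hx).differentiableAt.differentiableWithinAt)
      (fun x hx => (hgΦ x hx).differentiableAt.differentiableWithinAt)
      (fun x hx => (hgF x hx).deriv.trans (hgΦ x hx).deriv.symm) hx₀ (by simp only [h₀'])
  have hF' : EqOn F' Φ' s := fun x hx => mul_left_cancel₀ (hg x hx) (hgF' hx)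
  exact hs.eqOn_of_deriv_eq hs' (fun x hx => (hF x hx).differentiableAt.differentiableWithinAt)
    (fun x hx => (hΦ x hx).differentiableAt.differentiableWithinAt)
    (fun x hx => by rw [(hF x hx).deriv, (hΦ x hx).deriv, hF' hx]) hx₀ h₀

theorem hasSum_of_tendsto_nhdsLT {a : ℕ → ℝ} {m : ℕ → ℕ} {g : ℝ → ℝ} {ρ L : ℝ}
    (ha : ∀ k, 0 ≤ a k) (hρ : 0 < ρ)
    (hg : ∀ y ∈ Ioo 0 ρ, HasSum (fun k => a k * y ^ m k) (g y))
    (hL : Tendsto g (𝓝[<] ρ) (𝓝 L)) :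
    HasSum (fun k => a k * ρ ^ m k) L := by
  have term_mono : ∀ {y z}, 0 ≤ y → y ≤ z → ∀ k, a k * y ^ m k ≤ a k * z ^ m k :=
    fun hy hyz k => mul_le_mul_of_nonneg_left (pow_le_pow_left₀ hy hyz _) (ha k)
  have g_le : ∀ y ∈ Ioo 0 ρ, g y ≤ L := fun y hy => by
    refine ge_of_tendsto hL ?_
    filter_upwards [Ioo_mem_nhdsLT hy.2] with z hz
    exact hasSum_le (term_mono hy.1.le hz.1.le) (hg y hy) (hg z ⟨hy.1.trans hz.1, hz.2⟩)
  have partial_le : ∀ N, ∑ k ∈ Finset.range N, a k * ρ ^ m k ≤ L := fun N => by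
    have hcont : Continuous fun y : ℝ => ∑ k ∈ Finset.range N, a k * y ^ m k := by fun_prop
    refine le_of_tendsto ((hcont.tendsto ρ).mono_left (nhdsWithin_le_nhds (s := Iio ρ))) ?_
    filter_upwards [Ioo_mem_nhdsLT hρ] with y hy
    exact (sum_le_hasSum _ (fun k _ => mul_nonneg (ha k) (pow_nonneg hy.1.le _)) (hg y hy)).trans
      (g_le y hy)
  have hsum :=
    summable_of_sum_range_le (fun k => mul_nonneg (ha k) (pow_nonneg hρ.le _)) partial_le
  convert hsum.hasSum
  refine le_antisymm (le_of_tendsto hL ?_) (hsum.tsum_le_of_sum_range_le partial_le)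
  filter_upwards [Ioo_mem_nhdsLT hρ] with y hy
  exact hasSum_le (term_mono hy.1.le hy.2.le) (hg y hy) hsum.hasSum

lemma harmonic2_zero : harmonic2 0 = 0 := by simp [harmonic2]

lemma harmonic2_succ (k : ℕ) : harmonic2 (k + 1) = harmonic2 k + 1 / ((k : ℝ) + 1) ^ 2 :=
  Finset.sum_range_succ _ k

lemma harmonic2_nonneg (k : ℕ) : 0 ≤ harmonic2 k :=
  Finset.sum_nonneg fun j _ => by positivity

lemma harmonic2_le_self (k : ℕ) : harmonic2 k ≤ k := by
  calc harmonic2 k ≤ ∑ _j ∈ Finset.range k, (1 : ℝ) :=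
        Finset.sum_le_sum fun j _ => div_le_one_of_le₀
          (one_le_pow₀ (by linarith [(j.cast_nonneg : (0 : ℝ) ≤ j)])) (by positivity)
    _ = k := by simp

lemma abs_three_halves_mul_harmonic2_le (k : ℕ) :
    |3 / 2 * harmonic2 k| ≤ 3 / 2 * ((k : ℝ) + 1) ^ 1 := by
  rw [abs_of_nonneg (by positivity [harmonic2_nonneg k]), pow_one]
  linarith [harmonic2_le_self k]

noncomputable def centralBinomCoeff (s : ℕ → ℝ) (k : ℕ) : ℝ :=
  s k / (((k + 1 : ℕ) : ℝ) ^ 2 * ((k + 1).centralBinom : ℝ))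

noncomputable def centralBinomSeries (s : ℕ → ℝ) (x : ℝ) : ℝ :=
  ∑' k, centralBinomCoeff s k * x ^ (2 * (k + 1))

noncomputable def centralBinomSeriesDeriv (s : ℕ → ℝ) (x : ℝ) : ℝ :=
  ∑' k, centralBinomCoeff s k * (2 * k + 2) * x ^ (2 * k + 1)

section CentralBinomSeries

variable {s t : ℕ → ℝ} {C : ℝ} {p : ℕ}

lemma abs_centralBinomCoeff_le (hs : ∀ k, |s k| ≤ C * ((k : ℝ) + 1) ^ p) (k : ℕ) :
    |centralBinomCoeff s k| ≤ C * ((k : ℝ) + 1) ^ (p + 1) / (2 * 4 ^ k) := by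
  have hB : (0 : ℝ) < (k + 1).centralBinom := by exact_mod_cast Nat.centralBinom_pos _
  have h4 : (4 : ℝ) ^ (k + 1) ≤ 2 * ((k : ℝ) + 1) * (k + 1).centralBinom := by
    exact_mod_cast Nat.four_pow_le_two_mul_self_mul_centralBinom (k + 1) k.succ_pos
  have hk : (1 : ℝ) ≤ ((k : ℝ) + 1) ^ 2 :=
    one_le_pow₀ (by linarith [k.cast_nonneg (α := ℝ)])
  have hC : 0 ≤ C * ((k : ℝ) + 1) ^ p := (abs_nonneg _).trans (hs k)
  unfold centralBinomCoeff
  have hD : (0 : ℝ) < ((k + 1 : ℕ) : ℝ) ^ 2 * (k + 1).centralBinom := by positivity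
  rw [abs_div, abs_of_pos hD, div_le_div_iff₀ hD (by positivity)]
  push_cast
  set B : ℝ := ((k + 1).centralBinom : ℝ)
  calc |s k| * (2 * 4 ^ k) ≤ C * ((k : ℝ) + 1) ^ p * (((k : ℝ) + 1) * B) :=
        mul_le_mul (hs k) (by linarith [pow_succ (4 : ℝ) k]) (by positivity) hC
    _ ≤ C * ((k : ℝ) + 1) ^ p * (((k : ℝ) + 1) * B) * ((k : ℝ) + 1) ^ 2 :=
        le_mul_of_one_le_right (by positivity) hk
    _ = C * ((k : ℝ) + 1) ^ (p + 1) * (((k : ℝ) + 1) ^ 2 * B) := by ring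

lemma summable_centralBinomCoeff_mul_pow (hs : ∀ k, |s k| ≤ C * ((k : ℝ) + 1) ^ p)
    {P : ℕ → ℝ} {D : ℝ} {q : ℕ} (hP : ∀ k, |P k| ≤ D * ((k : ℝ) + 1) ^ q) (j : ℕ)
    {x : ℝ} (hx : |x| < 2) :
    Summable fun k => centralBinomCoeff s k * P k * x ^ (2 * k + j) := by
  have hq : |x ^ 2 / 4| < 1 := by
    rw [abs_div, abs_pow, abs_of_pos (by norm_num : (0 : ℝ) < 4), div_lt_one (by norm_num)]
    nlinarith [abs_nonneg x]
  refine Summable.of_norm_bounded ((summable_succ_pow_mul_geometric (p + 1 + q) hq).mul_left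
    (C * D * |x| ^ j / 2)) fun k => ?_
  have hc := abs_centralBinomCoeff_le hs k
  calc ‖centralBinomCoeff s k * P k * x ^ (2 * k + j)‖
      = |centralBinomCoeff s k| * |P k| * (|x| ^ j * (x ^ 2) ^ k) := by
        rw [Real.norm_eq_abs, abs_mul, abs_mul, abs_pow, pow_add, pow_mul, sq_abs]; ring
    _ ≤ C * ((k : ℝ) + 1) ^ (p + 1) / (2 * 4 ^ k) * (D * ((k : ℝ) + 1) ^ q)
          * (|x| ^ j * (x ^ 2) ^ k) :=
        mul_le_mul_of_nonneg_right
          (mul_le_mul hc (hP k) (abs_nonneg _) ((abs_nonneg _).trans hc)) (by positivity)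
    _ = _ := by rw [div_pow]; ring

lemma summable_centralBinomSeries (hs : ∀ k, |s k| ≤ C * ((k : ℝ) + 1) ^ p) {x : ℝ}
    (hx : |x| < 2) : Summable fun k => centralBinomCoeff s k * x ^ (2 * (k + 1)) :=
  (summable_centralBinomCoeff_mul_pow hs (P := 1) (D := 1) (q := 0) (fun k => by simp) 2
    hx).congr fun k => by simp only [Pi.one_apply, mul_one]; rfl

lemma hasDerivAt_centralBinomSeries (hs : ∀ k, |s k| ≤ C * ((k : ℝ) + 1) ^ p) {x : ℝ}
    (hx : |x| < 2) : HasDerivAt (centralBinomSeries s) (centralBinomSeriesDeriv s x) x := by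
  have hr : |(|x| + 2) / 2| < 2 := by
    rw [abs_of_nonneg (by positivity)]; linarith
  have hc : Summable fun k => centralBinomCoeff s k * (((2 * k + 1 : ℕ) : ℝ) + 1)
      * ((|x| + 2) / 2) ^ (2 * k + 1) :=
    summable_centralBinomCoeff_mul_pow hs (D := 2) (q := 1)
      (fun k => by rw [abs_of_nonneg (by positivity)]; push_cast; linarith) 1 hr
  exact (hasDerivAt_tsum_mul_pow_succ hc (by linarith)).congr_deriv
    (tsum_congr fun k => by push_cast; ring)

lemma hasDerivAt_centralBinomSeriesDeriv (hs : ∀ k, |s k| ≤ C * ((k : ℝ) + 1) ^ p) {x : ℝ}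
    (hx : |x| < 2) : HasDerivAt (centralBinomSeriesDeriv s)
      (∑' k, centralBinomCoeff s k * (2 * k + 2) * (2 * k + 1) * x ^ (2 * k)) x := by
  have hr : |(|x| + 2) / 2| < 2 := by
    rw [abs_of_nonneg (by positivity)]; linarith
  have hc : Summable fun k => centralBinomCoeff s k * (2 * k + 2) * (((2 * k : ℕ) : ℝ) + 1)
      * ((|x| + 2) / 2) ^ (2 * k) :=
    (summable_centralBinomCoeff_mul_pow hs
      (P := fun k => (2 * k + 2) * (((2 * k : ℕ) : ℝ) + 1)) (D := 4) (q := 2)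
      (fun k => by rw [abs_of_nonneg (by positivity)]; push_cast; nlinarith) 0 hr).congr
      fun k => by ring
  exact (hasDerivAt_tsum_mul_pow_succ hc (by linarith)).congr_deriv
    (tsum_congr fun k => by push_cast; ring)

lemma centralBinomCoeff_succ (hst : ∀ k, s (k + 1) - s k = t k / ((k : ℝ) + 1) ^ 2)
    (k : ℕ) :
    4 * (centralBinomCoeff s (k + 1) * (2 * ((k + 1 : ℕ) : ℝ) + 2)
        * (2 * ((k + 1 : ℕ) : ℝ) + 1))
      - centralBinomCoeff s k * (2 * k + 2) * (2 * k + 1) - centralBinomCoeff s k * (2 * k + 2)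
      = 4 * centralBinomCoeff t k := by
  have hrec : ((k + 2).centralBinom : ℝ) = 2 * (2 * k + 3) * (k + 1).centralBinom / (k + 2) := by
    have : ((k + 2 : ℕ) : ℝ) * (k + 2).centralBinom
        = ((2 * (2 * (k + 1) + 1) : ℕ) : ℝ) * (k + 1).centralBinom := by
      exact_mod_cast Nat.succ_mul_centralBinom_succ (k + 1)
    push_cast at this
    rw [eq_div_iff (by positivity)]
    linarith
  have hs' : s (k + 1) = s k + t k / ((k : ℝ) + 1) ^ 2 := by linarith [hst k]
  unfold centralBinomCoeff
  rw [hs', show k + 1 + 1 = k + 2 from rfl, hrec]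
  push_cast
  field_simp
  ring

lemma centralBinomSeries_ode (hs : ∀ k, |s k| ≤ C * ((k : ℝ) + 1) ^ p)
    (hst : ∀ k, s (k + 1) - s k = t k / ((k : ℝ) + 1) ^ 2) {x : ℝ} (hx : |x| < 2) :
    (4 - x ^ 2) * (∑' k, centralBinomCoeff s k * (2 * k + 2) * (2 * k + 1) * x ^ (2 * k))
      - x * centralBinomSeriesDeriv s x = 4 * s 0 + 4 * centralBinomSeries t x := by
  set d : ℕ → ℝ := fun k => centralBinomCoeff s k * (2 * k + 2) * (2 * k + 1)
  set e : ℕ → ℝ := fun k => centralBinomCoeff s k * (2 * k + 2)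
  have hd : ∀ k : ℕ, |(2 * (k : ℝ) + 2) * (2 * k + 1)| ≤ 4 * ((k : ℝ) + 1) ^ 2 :=
    fun k => by rw [abs_of_nonneg (by positivity)]; nlinarith
  have he : ∀ k : ℕ, |2 * (k : ℝ) + 2| ≤ 2 * ((k : ℝ) + 1) ^ 1 := fun k => by
    rw [abs_of_nonneg (by positivity)]; linarith
  have Sd : Summable fun k => d k * x ^ (2 * k) :=
    (summable_centralBinomCoeff_mul_pow hs hd 0 hx).congr fun k => by ring
  have Sd' : Summable fun k => d k * x ^ (2 * k + 2) :=
    (summable_centralBinomCoeff_mul_pow hs hd 2 hx).congr fun k => by ring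
  have Se' : Summable fun k => e k * x ^ (2 * k + 2) :=
    summable_centralBinomCoeff_mul_pow hs he 2 hx
  have hd0 : d 0 = s 0 := by simp [d, centralBinomCoeff, Nat.centralBinom, Nat.choose]
  have shifted :
      HasSum (fun k => d (k + 1) * x ^ (2 * (k + 1))) (∑' k, d k * x ^ (2 * k) - d 0) := by
    simpa using (hasSum_nat_add_iff' 1).2 Sd.hasSum
  have combined := ((shifted.mul_left 4).sub Sd'.hasSum).sub Se'.hasSum
  have hT : 4 * centralBinomSeries t x
      = 4 * (∑' k, d k * x ^ (2 * k) - d 0) - ∑' k, d k * x ^ (2 * k + 2)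
        - ∑' k, e k * x ^ (2 * k + 2) := by
    rw [centralBinomSeries, ← tsum_mul_left, ← combined.tsum_eq]
    refine tsum_congr fun k => ?_
    rw [← mul_assoc, ← centralBinomCoeff_succ hst k]
    simp only [d, e]
    ring
  have hx2 : x ^ 2 * ∑' k, d k * x ^ (2 * k) = ∑' k, d k * x ^ (2 * k + 2) := by
    rw [← tsum_mul_left]; exact tsum_congr fun k => by ring
  have hxS : x * centralBinomSeriesDeriv s x = ∑' k, e k * x ^ (2 * k + 2) := by
    rw [centralBinomSeriesDeriv, ← tsum_mul_left]; exact tsum_congr fun k => by ring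
  show (4 - x ^ 2) * ∑' k, d k * x ^ (2 * k) - _ = _
  rw [hT, hxS, ← hd0, sub_mul, hx2]
  ring

end CentralBinomSeries

lemma centralBinomSeries_const_mul (a : ℝ) (s : ℕ → ℝ) (x : ℝ) :
    centralBinomSeries (fun k => a * s k) x = a * centralBinomSeries s x := by
  rw [centralBinomSeries, centralBinomSeries, ← tsum_mul_left]
  exact tsum_congr fun k => by simp only [centralBinomCoeff]; ring

lemma centralBinomSeries_abs (s : ℕ → ℝ) (x : ℝ) :
    centralBinomSeries s |x| = centralBinomSeries s x := by
  simp [centralBinomSeries, Even.pow_abs]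

lemma sqrt_four_sub_sq_pos {x : ℝ} (hx : x ∈ Ioo (-2 : ℝ) 2) : 0 < √(4 - x ^ 2) :=
  Real.sqrt_pos.2 (by nlinarith [hx.1, hx.2])

lemma hasDerivAt_sqrt_four_sub_sq {x : ℝ} (hx : x ∈ Ioo (-2 : ℝ) 2) :
    HasDerivAt (fun y => √(4 - y ^ 2)) (-x / √(4 - x ^ 2)) x := by
  refine (((hasDerivAt_pow 2 x).const_sub 4).sqrt
    (sqrt_pos.1 (sqrt_four_sub_sq_pos hx)).ne').congr_deriv ?_
  field_simp
  ring

lemma hasDerivAt_arcsin_half {x : ℝ} (hx : x ∈ Ioo (-2 : ℝ) 2) :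
    HasDerivAt (fun y => arcsin (y / 2)) (1 / √(4 - x ^ 2)) x := by
  have h : HasDerivAt (fun y => arcsin (y / 2)) (1 / √(1 - (x / 2) ^ 2) * (1 / 2)) x :=
    (hasDerivAt_arcsin (by linarith [hx.1]) (by linarith [hx.2])).comp x
      ((hasDerivAt_id x).div_const 2)
  refine h.congr_deriv ?_
  rw [show 4 - x ^ 2 = 2 ^ 2 * (1 - (x / 2) ^ 2) by ring, sqrt_mul (by norm_num),
    sqrt_sq (by norm_num)]
  field_simp

lemma hasDerivAt_sqrt_four_sub_sq_mul {F' : ℝ → ℝ} {F'' x : ℝ} (hx : x ∈ Ioo (-2 : ℝ) 2)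
    (hF : HasDerivAt F' F'' x) :
    HasDerivAt (fun y => √(4 - y ^ 2) * F' y)
      (((4 - x ^ 2) * F'' - x * F' x) / √(4 - x ^ 2)) x := by
  refine ((hasDerivAt_sqrt_four_sub_sq hx).fun_mul hF).congr_deriv ?_
  have hσ := sqrt_four_sub_sq_pos hx
  field_simp
  rw [sq_sqrt (sqrt_pos.1 hσ).le]
  ring

lemma hasDerivAt_arcsin_half_pow (n : ℕ) {x : ℝ} (hx : x ∈ Ioo (-2 : ℝ) 2) :
    HasDerivAt (fun y => arcsin (y / 2) ^ (n + 2))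
      ((n + 2) * arcsin (x / 2) ^ (n + 1) / √(4 - x ^ 2)) x := by
  refine ((hasDerivAt_arcsin_half hx).fun_pow (n + 2)).congr_deriv ?_
  push_cast
  ring

lemma hasDerivAt_sqrt_four_sub_sq_mul_arcsin_half_pow (n : ℕ) {x : ℝ}
    (hx : x ∈ Ioo (-2 : ℝ) 2) :
    HasDerivAt (fun y => √(4 - y ^ 2) * ((n + 2) * arcsin (y / 2) ^ (n + 1) / √(4 - y ^ 2)))
      ((n + 2) * (n + 1) * arcsin (x / 2) ^ n / √(4 - x ^ 2)) x := by
  have h := ((hasDerivAt_arcsin_half hx).fun_pow (n + 1)).const_mul ((n : ℝ) + 2)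
  refine (h.congr_of_eventuallyEq ?_).congr_deriv ?_
  · filter_upwards [isOpen_Ioo.mem_nhds hx] with y hy
    field_simp [(sqrt_four_sub_sq_pos hy).ne']
  · push_cast
    ring

theorem centralBinomSeries_eqOn_arcsin_half_pow {s t : ℕ → ℝ} {C : ℝ} {p : ℕ}
    (hs : ∀ k, |s k| ≤ C * ((k : ℝ) + 1) ^ p)
    (hst : ∀ k, s (k + 1) - s k = t k / ((k : ℝ) + 1) ^ 2) (n : ℕ)
    (hR : ∀ x ∈ Ioo (-2 : ℝ) 2,
      4 * s 0 + 4 * centralBinomSeries t x = (n + 2) * (n + 1) * arcsin (x / 2) ^ n) :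
    EqOn (centralBinomSeries s) (fun x => arcsin (x / 2) ^ (n + 2)) (Ioo (-2) 2) := by
  have habs : ∀ x ∈ Ioo (-2 : ℝ) 2, |x| < 2 := fun x hx => abs_lt.2 hx
  refine eqOn_of_hasDerivAt_mul_deriv isOpen_Ioo (convex_Ioo _ _).isPreconnected
    (x₀ := 0) ⟨by norm_num, by norm_num⟩ (g := fun y => √(4 - y ^ 2))
    (F' := centralBinomSeriesDeriv s)
    (Φ' := fun y => (n + 2) * arcsin (y / 2) ^ (n + 1) / √(4 - y ^ 2))
    (R := fun x => (n + 2) * (n + 1) * arcsin (x / 2) ^ n / √(4 - x ^ 2))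
    (fun x hx => (sqrt_four_sub_sq_pos hx).ne')
    (fun x hx => hasDerivAt_centralBinomSeries hs (habs x hx))
    (fun x hx => hasDerivAt_arcsin_half_pow n hx) (fun x hx => ?_)
    (fun x hx => hasDerivAt_sqrt_four_sub_sq_mul_arcsin_half_pow n hx) ?_ ?_
  · rw [← hR x hx, ← centralBinomSeries_ode hs hst (habs x hx)]
    exact hasDerivAt_sqrt_four_sub_sq_mul hx (hasDerivAt_centralBinomSeriesDeriv hs (habs x hx))
  · simp [centralBinomSeries]
  · simp [centralBinomSeriesDeriv]

lemma centralBinomSeries_eqOn_arcsin_half_sq :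
    EqOn (centralBinomSeries fun _ => 1 / 2) (fun x => arcsin (x / 2) ^ 2) (Ioo (-2) 2) :=
  centralBinomSeries_eqOn_arcsin_half_pow (C := 1 / 2) (p := 0) (t := 0) (fun k => by norm_num)
    (fun k => by simp) 0 (fun x _ => by simp [centralBinomSeries, centralBinomCoeff]; norm_num)

lemma centralBinomSeries_eqOn_arcsin_half_pow_four :
    EqOn (centralBinomSeries fun k => 3 / 2 * harmonic2 k) (fun x => arcsin (x / 2) ^ 4)
      (Ioo (-2) 2) :=
  centralBinomSeries_eqOn_arcsin_half_pow abs_three_halves_mul_harmonic2_le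
    (t := fun _ => 3 * (1 / 2)) (fun k => by rw [harmonic2_succ]; ring) 2 fun x hx => by
      rw [harmonic2_zero, centralBinomSeries_const_mul, centralBinomSeries_eqOn_arcsin_half_sq hx]
      push_cast
      ring

lemma centralBinomSeries_harmonic2_at_two :
    centralBinomSeries (fun k => 3 / 2 * harmonic2 k) 2 = arcsin (2 / 2) ^ 4 := by
  have hnonneg : ∀ k, 0 ≤ centralBinomCoeff (fun k => 3 / 2 * harmonic2 k) k := fun k => by
    have := harmonic2_nonneg k
    unfold centralBinomCoeff
    positivity
  refine (hasSum_of_tendsto_nhdsLT (g := fun y => arcsin (y / 2) ^ 4) hnonneg two_pos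
    (fun y hy => ?_) ?_).tsum_eq
  · have hy' : |y| < 2 := abs_lt.2 ⟨by linarith [hy.1], hy.2⟩
    convert (summable_centralBinomSeries abs_three_halves_mul_harmonic2_le hy').hasSum
    exact (centralBinomSeries_eqOn_arcsin_half_pow_four ⟨by linarith [hy.1], hy.2⟩).symm
  · exact ((continuous_arcsin.comp (continuous_id.div_const 2)).pow 4).tendsto 2
      |>.mono_left nhdsWithin_le_nhds

theorem arcsin_half_pow_four_eq_centralBinomSeries {x : ℝ} (hx : x ∈ Icc (-2 : ℝ) 2) :
    arcsin (x / 2) ^ 4 = centralBinomSeries (fun k => 3 / 2 * harmonic2 k) x := by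
  have h_abs : arcsin (|x| / 2) ^ 4 = arcsin (x / 2) ^ 4 := by
    rcases abs_choice x with h | h <;> rw [h]
    rw [neg_div, arcsin_neg, Even.neg_pow (by decide)]
  rw [← h_abs, ← centralBinomSeries_abs]
  rcases (abs_le.2 hx).lt_or_eq with hlt | heq
  · exact (centralBinomSeries_eqOn_arcsin_half_pow_four
      ⟨by linarith [abs_nonneg x], hlt⟩).symm
  · rw [heq, centralBinomSeries_harmonic2_at_two]

theorem stmt_8 (x : ℝ) (hx : -2 ≤ x ∧ x ≤ 2) :
    (Real.arcsin (x / 2)) ^ 4 =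
      3 / 2 * ∑' k : ℕ,
        harmonic2 k /
          (((k + 1 : ℕ) : ℝ) ^ 2 * (Nat.choose (2 * (k + 1)) (k + 1) : ℝ)) *
            x ^ (2 * (k + 1)) := by
  rw [arcsin_half_pow_four_eq_centralBinomSeries hx, centralBinomSeries_const_mul]
  rfl
end

section
/- The series \sum_{k=1}^{\infty} \frac{(15k-4)(-27)^{k-1}}{k^3 \binom{2k}{k}^2 \binom{3k}{k}} converges to L_{-3}(2) = \sum_{n=0}^{\infty} (1/(3n+1)^2 - 1/(3n+2)^2). -/
open Finset Filter Topology

noncomputable def aa (n : ℕ) : ℝ :=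
  3 * (-3)^n * ((3*n+1).factorial : ℝ) * ((n).factorial : ℝ)^2 * ((n+1).factorial : ℝ)
    / ((2*n).factorial : ℝ)

noncomputable def dd1 (n k : ℕ) : ℝ := ∏ j ∈ Finset.range (n+1), (3*(k:ℝ) + 3*(j:ℝ) + 1)
noncomputable def dd2 (n k : ℕ) : ℝ := ∏ j ∈ Finset.range (n+1), (3*(k:ℝ) + 3*(j:ℝ) + 2)

noncomputable def FF (n k : ℕ) : ℝ :=
  aa n * ((n:ℝ)+1+2*(k:ℝ)) / (((n:ℝ)+1) * (dd1 n k ^2 * dd2 n k ^2))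

noncomputable def GG (n k : ℕ) : ℝ :=
  aa n * (45*(n:ℝ)^2+63*(n:ℝ)+22+18*(3*(n:ℝ)+2)*(k:ℝ)+18*(k:ℝ)^2)
    / (18*((n:ℝ)+1)*(2*(n:ℝ)+1) * (dd1 n k ^2 * dd2 n k ^2))

lemma dd1_pos (n k : ℕ) : 0 < dd1 n k :=
  Finset.prod_pos (fun j _ => by positivity)

lemma dd2_pos (n k : ℕ) : 0 < dd2 n k :=
  Finset.prod_pos (fun j _ => by positivity)

lemma aa_zero : aa 0 = 3 := by
  simp [aa, Nat.factorial]

lemma aa_ratio (n : ℕ) : aa (n+1) * (2*(2*(n:ℝ)+1)) =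
    -(aa n * (9*(3*(n:ℝ)+2)*(3*(n:ℝ)+4)*((n:ℝ)+1)^2*((n:ℝ)+2))) := by
  have e1 : ((3*(n+1)+1).factorial : ℝ)
      = (3*(n:ℝ)+4)*(3*(n:ℝ)+3)*(3*(n:ℝ)+2)*((3*n+1).factorial : ℝ) := by
    rw [show 3*(n+1)+1 = (3*n+1)+1+1+1 by ring, Nat.factorial_succ, Nat.factorial_succ,
      Nat.factorial_succ]
    push_cast; ring
  have e2 : ((2*(n+1)).factorial : ℝ) = (2*(n:ℝ)+2)*(2*(n:ℝ)+1)*((2*n).factorial : ℝ) := by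
    rw [show 2*(n+1) = (2*n)+1+1 by ring, Nat.factorial_succ, Nat.factorial_succ]
    push_cast; ring
  have e3 : ((n+1).factorial : ℝ) = ((n:ℝ)+1)*((n).factorial : ℝ) := by
    rw [Nat.factorial_succ]; push_cast; ring
  have e4 : ((n+1+1).factorial : ℝ) = ((n:ℝ)+2)*((n:ℝ)+1)*((n).factorial : ℝ) := by
    rw [Nat.factorial_succ, Nat.factorial_succ]; push_cast; ring
  have h2n : ((2*n).factorial : ℝ) ≠ 0 := Nat.cast_ne_zero.2 (Nat.factorial_ne_zero _)
  simp only [aa, e1, e2, e3, e4, pow_succ]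
  field_simp
  ring

lemma dd1_succ_n (n k : ℕ) : dd1 (n+1) k = dd1 n k * (3*(k:ℝ)+3*(n:ℝ)+4) := by
  rw [dd1, Finset.prod_range_succ, ← dd1]
  congr 1; push_cast; ring

lemma dd2_succ_n (n k : ℕ) : dd2 (n+1) k = dd2 n k * (3*(k:ℝ)+3*(n:ℝ)+5) := by
  rw [dd2, Finset.prod_range_succ, ← dd2]
  congr 1; push_cast; ring

lemma dd1_succ_k (n k : ℕ) : dd1 n (k+1) * (3*(k:ℝ)+1) = dd1 (n+1) k := by
  conv_rhs => rw [dd1, Finset.prod_range_succ']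
  rw [dd1]
  congr 1
  · exact Finset.prod_congr rfl (fun j _ => by push_cast; ring)
  · push_cast; ring

lemma dd2_succ_k (n k : ℕ) : dd2 n (k+1) * (3*(k:ℝ)+2) = dd2 (n+1) k := by
  conv_rhs => rw [dd2, Finset.prod_range_succ']
  rw [dd2]
  congr 1
  · exact Finset.prod_congr rfl (fun j _ => by push_cast; ring)
  · push_cast; ring

lemma pair (n k : ℕ) : FF n k - FF (n+1) k = GG n k - GG n (k+1) := by
  have hX := dd1_pos n k
  have hY := dd2_pos n k
  have h31 : (0:ℝ) < 3*(k:ℝ)+1 := by positivity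
  have h32 : (0:ℝ) < 3*(k:ℝ)+2 := by positivity
  have h3 : dd1 n (k+1) = dd1 n k * (3*(k:ℝ)+3*(n:ℝ)+4) / (3*(k:ℝ)+1) := by
    rw [eq_div_iff h31.ne', dd1_succ_k, dd1_succ_n]
  have h4 : dd2 n (k+1) = dd2 n k * (3*(k:ℝ)+3*(n:ℝ)+5) / (3*(k:ℝ)+2) := by
    rw [eq_div_iff h32.ne', dd2_succ_k, dd2_succ_n]
  have ha : aa (n+1) =
      -(aa n * (9*(3*(n:ℝ)+2)*(3*(n:ℝ)+4)*((n:ℝ)+1)^2*((n:ℝ)+2))) / (2*(2*(n:ℝ)+1)) := by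
    rw [eq_div_iff (by positivity : (2*(2*(n:ℝ)+1)) ≠ 0), aa_ratio]
  simp only [FF, GG, h3, h4, ha, dd1_succ_n, dd2_succ_n]
  have hA : (0:ℝ) < 3*(k:ℝ)+3*(n:ℝ)+4 := by positivity
  have hB : (0:ℝ) < 3*(k:ℝ)+3*(n:ℝ)+5 := by positivity
  push_cast
  field_simp
  ring

lemma FF_zero (k : ℕ) : FF 0 k = 1 / (3 * (k : ℝ) + 1) ^ 2 - 1 / (3 * (k : ℝ) + 2) ^ 2 := by
  have h1 : dd1 0 k = 3*(k:ℝ)+1 := by simp [dd1]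
  have h2 : dd2 0 k = 3*(k:ℝ)+2 := by simp [dd2]
  have h31 : (0:ℝ) < 3*(k:ℝ)+1 := by positivity
  have h32 : (0:ℝ) < 3*(k:ℝ)+2 := by positivity
  simp only [FF, aa_zero, h1, h2]
  push_cast
  field_simp
  ring

lemma ddprod (n : ℕ) :
    dd1 n 0 * dd2 n 0 * ((3:ℝ)^(n+1) * (((n+1).factorial : ℕ) : ℝ)) = (((3*n+3).factorial : ℕ) : ℝ) := by
  induction n with
  | zero => simp [dd1, dd2, Nat.factorial]; norm_num
  | succ n ih =>
    have e1 : dd1 (n+1) 0 = dd1 n 0 * (3*(n:ℝ)+4) := by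
      have := dd1_succ_n n 0; simpa using this
    have e2 : dd2 (n+1) 0 = dd2 n 0 * (3*(n:ℝ)+5) := by
      have := dd2_succ_n n 0; simpa using this
    have e3 : (((n+1+1).factorial : ℕ) : ℝ) = ((n:ℝ)+2) * (((n+1).factorial : ℕ) : ℝ) := by
      rw [Nat.factorial_succ]; push_cast; ring
    have e4 : (((3*(n+1)+3).factorial : ℕ) : ℝ)
        = (3*(n:ℝ)+6)*(3*(n:ℝ)+5)*(3*(n:ℝ)+4) * (((3*n+3).factorial : ℕ) : ℝ) := by
      rw [show 3*(n+1)+3 = (3*n+3)+1+1+1 by ring, Nat.factorial_succ, Nat.factorial_succ,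
        Nat.factorial_succ]
      push_cast; ring
    rw [e1, e2, e3, e4, pow_succ, ← ih]
    ring

noncomputable def tt (n : ℕ) : ℝ :=
  (15 * ((n + 1 : ℕ) : ℝ) - 4) * (-27 : ℝ) ^ n /
    (((n + 1 : ℕ) : ℝ) ^ 3 * (Nat.choose (2 * (n + 1)) (n + 1) : ℝ) ^ 2 *
      (Nat.choose (3 * (n + 1)) (n + 1) : ℝ))

lemma GG_zero (n : ℕ) : GG n 0 = tt n := by
  have hfn1 : (0:ℝ) < (((n+1).factorial : ℕ) : ℝ) := by
    exact_mod_cast (n+1).factorial_pos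
  have hf2n : (0:ℝ) < (((2*n).factorial : ℕ) : ℝ) := by exact_mod_cast (2*n).factorial_pos
  have hf3n1 : (0:ℝ) < (((3*n+1).factorial : ℕ) : ℝ) := by
    exact_mod_cast (3*n+1).factorial_pos
  -- choose values
  have hc1 : (Nat.choose (2*(n+1)) (n+1) : ℝ) * (((n+1).factorial : ℕ) : ℝ)
      * (((n+1).factorial : ℕ) : ℝ) = (((2*(n+1)).factorial : ℕ) : ℝ) := by
    have h := Nat.choose_mul_factorial_mul_factorial (show n+1 ≤ 2*(n+1) by omega)
    rw [show 2*(n+1)-(n+1) = n+1 by omega] at h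
    exact_mod_cast congrArg (fun m : ℕ => (m : ℝ)) h
  have hc2 : (Nat.choose (3*(n+1)) (n+1) : ℝ) * (((n+1).factorial : ℕ) : ℝ)
      * (((2*(n+1)).factorial : ℕ) : ℝ) = (((3*(n+1)).factorial : ℕ) : ℝ) := by
    have h := Nat.choose_mul_factorial_mul_factorial (show n+1 ≤ 3*(n+1) by omega)
    rw [show 3*(n+1)-(n+1) = 2*(n+1) by omega] at h
    exact_mod_cast congrArg (fun m : ℕ => (m : ℝ)) h
  have hC1 : (Nat.choose (2*(n+1)) (n+1) : ℝ)
      = (((2*(n+1)).factorial : ℕ) : ℝ) / ((((n+1).factorial : ℕ) : ℝ) * (((n+1).factorial : ℕ) : ℝ)) := by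
    rw [eq_div_iff (by positivity)]
    linear_combination hc1
  have hC2 : (Nat.choose (3*(n+1)) (n+1) : ℝ)
      = (((3*(n+1)).factorial : ℕ) : ℝ)
        / ((((n+1).factorial : ℕ) : ℝ) * (((2*(n+1)).factorial : ℕ) : ℝ)) := by
    rw [eq_div_iff (by positivity)]
    linear_combination hc2
  -- dd product value
  have hdp := ddprod n
  have hdd : dd1 n 0 ^ 2 * dd2 n 0 ^ 2
      = (((3*n+3).factorial : ℕ) : ℝ)^2 / ((3:ℝ)^(n+1) * (((n+1).factorial : ℕ) : ℝ))^2 := by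
    rw [eq_div_iff (by positivity), ← mul_pow, ← mul_pow, hdp]
  -- factorial expansions
  have e24 : (((2*(n+1)).factorial : ℕ) : ℝ)
      = (2*(n:ℝ)+2)*(2*(n:ℝ)+1)*(((2*n).factorial : ℕ) : ℝ) := by
    rw [show 2*(n+1) = (2*n)+1+1 by ring, Nat.factorial_succ, Nat.factorial_succ]
    push_cast; ring
  have e34 : (((3*(n+1)).factorial : ℕ) : ℝ)
      = (3*(n:ℝ)+3)*(3*(n:ℝ)+2)*(((3*n+1).factorial : ℕ) : ℝ) := by
    rw [show 3*(n+1) = (3*n+1)+1+1 by ring, Nat.factorial_succ, Nat.factorial_succ]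
    push_cast; ring
  have e33 : (((3*n+3).factorial : ℕ) : ℝ)
      = (3*(n:ℝ)+3)*(3*(n:ℝ)+2)*(((3*n+1).factorial : ℕ) : ℝ) := by
    rw [show 3*n+3 = (3*n+1)+1+1 by ring, Nat.factorial_succ, Nat.factorial_succ]
    push_cast; ring
  have e11 : (((n+1).factorial : ℕ) : ℝ) = ((n:ℝ)+1)*(((n).factorial : ℕ) : ℝ) := by
    rw [Nat.factorial_succ]; push_cast; ring
  -- powers
  have p27 : ((-27:ℝ))^n = (-1:ℝ)^n * 3^n * 3^n * 3^n := by
    rw [show ((-27):ℝ) = (-1)*3*3*3 by norm_num, mul_pow, mul_pow, mul_pow]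
  have p3 : ((-3:ℝ))^n = (-1:ℝ)^n * 3^n := by
    rw [show ((-3):ℝ) = (-1)*3 by norm_num, mul_pow]
  have hfn : (0:ℝ) < (((n).factorial : ℕ) : ℝ) := by exact_mod_cast (n).factorial_pos
  have hz1 : ((n:ℝ)+1) ≠ 0 := by positivity
  have hz2 : (2*(n:ℝ)+1) ≠ 0 := by positivity
  have hz3 : (2*(n:ℝ)+2) ≠ 0 := by positivity
  have hz4 : (3*(n:ℝ)+2) ≠ 0 := by positivity
  have hz5 : (3*(n:ℝ)+3) ≠ 0 := by positivity
  simp only [GG, tt]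
  rw [hdd, hC1, hC2, e24, e34, e33, e11]
  simp only [aa, p27, p3, pow_succ, e11]
  push_cast
  rcases Nat.even_or_odd n with h | h <;>
    rw [h.neg_one_pow] <;>
    field_simp <;>
    ring

noncomputable def ee1 (n : ℕ) : ℝ := ∏ j ∈ Finset.range n, (3*(j:ℝ)+4)
noncomputable def ee2 (n : ℕ) : ℝ := ∏ j ∈ Finset.range n, (3*(j:ℝ)+5)
noncomputable def hh (n : ℕ) : ℝ := |aa n| / (ee1 n * ee2 n)^2

lemma ee1_pos (n : ℕ) : 0 < ee1 n := Finset.prod_pos (fun j _ => by positivity)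
lemma ee2_pos (n : ℕ) : 0 < ee2 n := Finset.prod_pos (fun j _ => by positivity)
lemma hh_nonneg (n : ℕ) : 0 ≤ hh n := by
  have := ee1_pos n; have := ee2_pos n
  rw [hh]; positivity

lemma dd1_ge (n k : ℕ) : ((k:ℝ)+1) * ee1 n ≤ dd1 n k := by
  have hk : (0:ℝ) ≤ (k:ℝ) := Nat.cast_nonneg k
  have e : dd1 n k = (∏ j ∈ Finset.range n, (3*(k:ℝ)+3*(j:ℝ)+4)) * (3*(k:ℝ)+1) := by
    rw [dd1, Finset.prod_range_succ']
    congr 1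
    · exact Finset.prod_congr rfl (fun j _ => by push_cast; ring)
    · push_cast; ring
  rw [e, mul_comm ((k:ℝ)+1) (ee1 n)]
  apply mul_le_mul
  · exact Finset.prod_le_prod (fun j _ => by positivity) (fun j _ => by linarith)
  · linarith
  · linarith
  · exact le_of_lt (Finset.prod_pos (fun j _ => by positivity))

lemma dd2_ge (n k : ℕ) : ((k:ℝ)+1) * ee2 n ≤ dd2 n k := by
  have hk : (0:ℝ) ≤ (k:ℝ) := Nat.cast_nonneg k
  have e : dd2 n k = (∏ j ∈ Finset.range n, (3*(k:ℝ)+3*(j:ℝ)+5)) * (3*(k:ℝ)+2) := by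
    rw [dd2, Finset.prod_range_succ']
    congr 1
    · exact Finset.prod_congr rfl (fun j _ => by push_cast; ring)
    · push_cast; ring
  rw [e, mul_comm ((k:ℝ)+1) (ee2 n)]
  apply mul_le_mul
  · exact Finset.prod_le_prod (fun j _ => by positivity) (fun j _ => by linarith)
  · linarith
  · linarith
  · exact le_of_lt (Finset.prod_pos (fun j _ => by positivity))

lemma dd_sq_ge (n k : ℕ) :
    (((k:ℝ)+1)^2 * (ee1 n * ee2 n))^2 ≤ (dd1 n k * dd2 n k)^2 := by
  have h1 := dd1_ge n k
  have h2 := dd2_ge n k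
  have he1 := ee1_pos n
  have he2 := ee2_pos n
  have hk : (0:ℝ) ≤ (k:ℝ) := Nat.cast_nonneg k
  have h := mul_le_mul h1 h2 (by positivity) (le_of_lt (dd1_pos n k))
  calc (((k:ℝ)+1)^2 * (ee1 n * ee2 n))^2 = ((((k:ℝ)+1)*ee1 n) * (((k:ℝ)+1)*ee2 n))^2 := by ring
  _ ≤ (dd1 n k * dd2 n k)^2 := by
      apply pow_le_pow_left₀ (by positivity) h

lemma FF_bound (n k : ℕ) : |FF n k| ≤ 2 * hh n * (1/((k:ℝ)+1)^2) := by
  have hk : (0:ℝ) ≤ (k:ℝ) := Nat.cast_nonneg k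
  have hn : (0:ℝ) ≤ (n:ℝ) := Nat.cast_nonneg n
  have hD1 := dd1_pos n k
  have hD2 := dd2_pos n k
  have he1 := ee1_pos n
  have he2 := ee2_pos n
  have habs : |FF n k| = |aa n| * (((n:ℝ)+1+2*(k:ℝ)) / (((n:ℝ)+1)*(dd1 n k^2*dd2 n k^2))) := by
    rw [FF, abs_div, abs_mul, abs_of_pos (by positivity : (0:ℝ) < (n:ℝ)+1+2*(k:ℝ)),
      abs_of_pos (by positivity : (0:ℝ) < ((n:ℝ)+1)*(dd1 n k^2*dd2 n k^2)), mul_div_assoc]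
  rw [habs]
  have hfrac : ((n:ℝ)+1+2*(k:ℝ)) / (((n:ℝ)+1)*(dd1 n k^2*dd2 n k^2))
      ≤ 2 / ((ee1 n * ee2 n)^2 * ((k:ℝ)+1)^2) := by
    rw [div_le_div_iff₀ (by positivity) (by positivity)]
    have hq : ((n:ℝ)+1+2*(k:ℝ)) ≤ 2*((n:ℝ)+1)*((k:ℝ)+1)^2 := by
      nlinarith [mul_nonneg hn hk, mul_nonneg hn (mul_nonneg hk hk), mul_nonneg hk hk]
    have hsq := dd_sq_ge n k
    nlinarith [mul_le_mul_of_nonneg_left hq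
        (by positivity : (0:ℝ) ≤ (ee1 n * ee2 n)^2 * ((k:ℝ)+1)^2),
      mul_le_mul_of_nonneg_left hsq (by positivity : (0:ℝ) ≤ 2*((n:ℝ)+1))]
  calc |aa n| * (((n:ℝ)+1+2*(k:ℝ)) / (((n:ℝ)+1)*(dd1 n k^2*dd2 n k^2)))
      ≤ |aa n| * (2 / ((ee1 n * ee2 n)^2 * ((k:ℝ)+1)^2)) :=
        mul_le_mul_of_nonneg_left hfrac (abs_nonneg _)
    _ = 2 * hh n * (1/((k:ℝ)+1)^2) := by
        rw [hh]
        have hk1 : ((k:ℝ)+1) ≠ 0 := by positivity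
        field_simp

lemma GG_bound (n k : ℕ) :
    |GG n k| ≤ hh n * (45*(n:ℝ)^2+117*(n:ℝ)+76) * (1/((k:ℝ)+1)^2) := by
  have hk : (0:ℝ) ≤ (k:ℝ) := Nat.cast_nonneg k
  have hn : (0:ℝ) ≤ (n:ℝ) := Nat.cast_nonneg n
  have hD1 := dd1_pos n k
  have hD2 := dd2_pos n k
  have he1 := ee1_pos n
  have he2 := ee2_pos n
  have hqpos : (0:ℝ) < 45*(n:ℝ)^2+63*(n:ℝ)+22+18*(3*(n:ℝ)+2)*(k:ℝ)+18*(k:ℝ)^2 := by positivity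
  have habs : |GG n k| = |aa n| *
      ((45*(n:ℝ)^2+63*(n:ℝ)+22+18*(3*(n:ℝ)+2)*(k:ℝ)+18*(k:ℝ)^2)
        / (18*((n:ℝ)+1)*(2*(n:ℝ)+1)*(dd1 n k^2*dd2 n k^2))) := by
    rw [GG, abs_div, abs_mul, abs_of_pos hqpos,
      abs_of_pos (by positivity : (0:ℝ) < 18*((n:ℝ)+1)*(2*(n:ℝ)+1)*(dd1 n k^2*dd2 n k^2)),
      mul_div_assoc]
  rw [habs]
  have hfrac : (45*(n:ℝ)^2+63*(n:ℝ)+22+18*(3*(n:ℝ)+2)*(k:ℝ)+18*(k:ℝ)^2)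
        / (18*((n:ℝ)+1)*(2*(n:ℝ)+1)*(dd1 n k^2*dd2 n k^2))
      ≤ (45*(n:ℝ)^2+117*(n:ℝ)+76) / ((ee1 n * ee2 n)^2 * ((k:ℝ)+1)^2) := by
    rw [div_le_div_iff₀ (by positivity) (by positivity)]
    have hq : (45*(n:ℝ)^2+63*(n:ℝ)+22+18*(3*(n:ℝ)+2)*(k:ℝ)+18*(k:ℝ)^2)
        ≤ (45*(n:ℝ)^2+117*(n:ℝ)+76)*((k:ℝ)+1)^2 := by
      nlinarith [mul_nonneg hn hk, mul_nonneg hn (mul_nonneg hk hk), mul_nonneg hk hk,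
        mul_nonneg (mul_nonneg hn hn) hk, mul_nonneg (mul_nonneg hn hn) (mul_nonneg hk hk)]
    have hsq := dd_sq_ge n k
    have h18 : (1:ℝ) ≤ 18*((n:ℝ)+1)*(2*(n:ℝ)+1) := by nlinarith [mul_nonneg hn hn]
    have hCpos : (0:ℝ) ≤ 45*(n:ℝ)^2+117*(n:ℝ)+76 := by positivity
    nlinarith [mul_le_mul_of_nonneg_left hq
        (by positivity : (0:ℝ) ≤ (ee1 n * ee2 n)^2 * ((k:ℝ)+1)^2),
      mul_le_mul_of_nonneg_left hsq hCpos,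
      mul_le_mul_of_nonneg_left h18
        (by positivity : (0:ℝ) ≤ (45*(n:ℝ)^2+117*(n:ℝ)+76) * (dd1 n k * dd2 n k)^2)]
  calc |aa n| * _ ≤ |aa n| * ((45*(n:ℝ)^2+117*(n:ℝ)+76) / ((ee1 n * ee2 n)^2 * ((k:ℝ)+1)^2)) :=
        mul_le_mul_of_nonneg_left hfrac (abs_nonneg _)
    _ = hh n * (45*(n:ℝ)^2+117*(n:ℝ)+76) * (1/((k:ℝ)+1)^2) := by
        rw [hh]
        have hk1 : ((k:ℝ)+1) ≠ 0 := by positivity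
        field_simp

lemma hh_step (n : ℕ) : hh (n+1) ≤ hh n / 2 := by
  have hn : (0:ℝ) ≤ (n:ℝ) := Nat.cast_nonneg n
  have he1 := ee1_pos n
  have he2 := ee2_pos n
  have hE1 : ee1 (n+1) = ee1 n * (3*(n:ℝ)+4) := by rw [ee1, Finset.prod_range_succ, ← ee1]
  have hE2 : ee2 (n+1) = ee2 n * (3*(n:ℝ)+5) := by rw [ee2, Finset.prod_range_succ, ← ee2]
  have haA : |aa (n+1)| * (2*(2*(n:ℝ)+1))
      = |aa n| * (9*(3*(n:ℝ)+2)*(3*(n:ℝ)+4)*((n:ℝ)+1)^2*((n:ℝ)+2)) := by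
    have h := congrArg abs (aa_ratio n)
    rwa [abs_mul (aa (n+1)) (2*(2*(n:ℝ)+1)), abs_neg,
      abs_mul (aa n) (9*(3*(n:ℝ)+2)*(3*(n:ℝ)+4)*((n:ℝ)+1)^2*((n:ℝ)+2)),
      abs_of_pos (by positivity : (0:ℝ) < 2*(2*(n:ℝ)+1)),
      abs_of_pos (by positivity : (0:ℝ) < 9*(3*(n:ℝ)+2)*(3*(n:ℝ)+4)*((n:ℝ)+1)^2*((n:ℝ)+2))] at h
  have haa1 : |aa (n+1)|
      = |aa n| * (9*(3*(n:ℝ)+2)*(3*(n:ℝ)+4)*((n:ℝ)+1)^2*((n:ℝ)+2)) / (2*(2*(n:ℝ)+1)) := by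
    rw [eq_div_iff (by positivity : (2*(2*(n:ℝ)+1)) ≠ 0)]
    exact haA
  rw [hh, hh, hE1, hE2, haa1, div_div, div_div]
  rw [div_le_div_iff₀ (by positivity) (by positivity)]
  have hpoly : 9*(3*(n:ℝ)+2)*((n:ℝ)+1)^2*((n:ℝ)+2) ≤ (2*(n:ℝ)+1)*(3*(n:ℝ)+4)*(3*(n:ℝ)+5)^2 := by
    nlinarith [pow_nonneg hn 4, pow_nonneg hn 3, pow_nonneg hn 2, hn]
  nlinarith [mul_le_mul_of_nonneg_left hpoly
    (by positivity : (0:ℝ) ≤ 2 * |aa n| * (ee1 n * ee2 n)^2 * (3*(n:ℝ)+4))]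

lemma hh_le (n : ℕ) : hh n ≤ 3*(1/2:ℝ)^n := by
  induction n with
  | zero =>
    have : hh 0 = 3 := by
      rw [hh, aa_zero]
      simp [ee1, ee2]
    rw [this]; norm_num
  | succ n ih =>
    have h1 := hh_step n
    have h2 : hh n / 2 ≤ 3*(1/2:ℝ)^n / 2 := by linarith
    calc hh (n+1) ≤ hh n / 2 := h1
      _ ≤ 3*(1/2:ℝ)^n / 2 := h2
      _ = 3*(1/2:ℝ)^(n+1) := by rw [pow_succ]; ring

lemma summable_u : Summable (fun k : ℕ => 1/((k:ℝ)+1)^2) := by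
  have h := Real.summable_one_div_nat_pow.mpr (show 1 < 2 by norm_num)
  have h2 := (summable_nat_add_iff 1).mpr h
  exact h2.congr (fun k => by push_cast; ring)

lemma summable_absFF (n : ℕ) : Summable (fun k => |FF n k|) :=
  Summable.of_nonneg_of_le (fun k => abs_nonneg _) (fun k => FF_bound n k)
    (summable_u.mul_left (2 * hh n))

lemma summable_FF (n : ℕ) : Summable (fun k => FF n k) :=
  summable_abs_iff.mp (summable_absFF n)

lemma hasSum_of_tendsto (f : ℕ → ℝ) (S : ℝ) (hf : Summable f)
    (h : Tendsto (fun N => ∑ n ∈ Finset.range N, f n) atTop (𝓝 S)) : HasSum f S := by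
  have h2 := hf.hasSum.tendsto_sum_nat
  have h3 : (∑' n, f n) = S := tendsto_nhds_unique h2 h
  exact h3 ▸ hf.hasSum

lemma GG_tendsto (n : ℕ) : Tendsto (fun k => GG n k) atTop (𝓝 0) := by
  have hbnd : ∀ k : ℕ, ‖GG n k‖ ≤ hh n * (45*(n:ℝ)^2+117*(n:ℝ)+76) * (1/((k:ℝ)+1)^2) :=
    fun k => by rw [Real.norm_eq_abs]; exact GG_bound n k
  have h0 : Tendsto (fun k : ℕ => 1/((k:ℝ)+1)^2) atTop (𝓝 0) := summable_u.tendsto_atTop_zero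
  have h : Tendsto (fun k : ℕ => hh n * (45*(n:ℝ)^2+117*(n:ℝ)+76) * (1/((k:ℝ)+1)^2)) atTop
      (𝓝 0) := by
    simpa using h0.const_mul (hh n * (45*(n:ℝ)^2+117*(n:ℝ)+76))
  exact squeeze_zero_norm hbnd h

lemma RR_step (n : ℕ) : (∑' k, FF n k) - (∑' k, FF (n+1) k) = GG n 0 := by
  have h1 := summable_FF n
  have h2 := summable_FF (n+1)
  have hdiff : Summable (fun k => GG n k - GG n (k+1)) :=
    (h1.sub h2).congr (fun k => pair n k)
  have hsum : ∀ K, ∑ k ∈ Finset.range K, (GG n k - GG n (k+1)) = GG n 0 - GG n K :=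
    fun K => Finset.sum_range_sub' (fun i => GG n i) K
  have htend : Tendsto (fun K => ∑ k ∈ Finset.range K, (GG n k - GG n (k+1))) atTop
      (𝓝 (GG n 0)) := by
    simp only [hsum]
    simpa using tendsto_const_nhds.sub (GG_tendsto n)
  have hhs : HasSum (fun k => GG n k - GG n (k+1)) (GG n 0) :=
    hasSum_of_tendsto _ _ hdiff htend
  calc (∑' k, FF n k) - (∑' k, FF (n+1) k) = ∑' k, (FF n k - FF (n+1) k) :=
        (Summable.tsum_sub h1 h2).symm
    _ = ∑' k, (GG n k - GG n (k+1)) := tsum_congr (pair n)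
    _ = GG n 0 := hhs.tsum_eq

lemma hh_tendsto : Tendsto hh atTop (𝓝 0) := by
  apply squeeze_zero hh_nonneg hh_le
  have h := tendsto_pow_atTop_nhds_zero_of_lt_one (show (0:ℝ) ≤ 1/2 by norm_num)
    (show (1/2:ℝ) < 1 by norm_num)
  simpa using h.const_mul 3

lemma RR_tendsto : Tendsto (fun N => ∑' k, FF N k) atTop (𝓝 0) := by
  have hg : Tendsto (fun N => 2 * hh N * (∑' k : ℕ, 1/((k:ℝ)+1)^2)) atTop (𝓝 0) := by
    have h : Tendsto (fun N => 2 * hh N) atTop (𝓝 0) := by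
      simpa using (hh_tendsto.const_mul 2)
    simpa only [zero_mul] using h.mul_const (∑' k : ℕ, 1/((k:ℝ)+1)^2)
  apply squeeze_zero_norm (fun N => ?_) hg
  calc ‖∑' k, FF N k‖ ≤ ∑' k, ‖FF N k‖ := norm_tsum_le_tsum_norm (by
        simpa [Real.norm_eq_abs] using summable_absFF N)
      _ ≤ ∑' k : ℕ, 2 * hh N * (1/((k:ℝ)+1)^2) := by
          apply Summable.tsum_le_tsum (fun k => by
              rw [Real.norm_eq_abs]; exact FF_bound N k)
            (by simpa [Real.norm_eq_abs] using summable_absFF N)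
            (summable_u.mul_left (2 * hh N))
      _ = 2 * hh N * (∑' k : ℕ, 1/((k:ℝ)+1)^2) := tsum_mul_left

lemma tt_bound (n : ℕ) : |tt n| ≤ 3*(1/2:ℝ)^n * (45*(n:ℝ)^2+117*(n:ℝ)+76) := by
  rw [← GG_zero]
  calc |GG n 0| ≤ hh n * (45*(n:ℝ)^2+117*(n:ℝ)+76) * (1/(((0:ℕ):ℝ)+1)^2) := GG_bound n 0
    _ = hh n * (45*(n:ℝ)^2+117*(n:ℝ)+76) := by norm_num
    _ ≤ 3*(1/2:ℝ)^n * (45*(n:ℝ)^2+117*(n:ℝ)+76) :=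
        mul_le_mul_of_nonneg_right (hh_le n) (by positivity)

lemma summable_tt : Summable tt := by
  have s2 := summable_pow_mul_geometric_of_norm_lt_one (R := ℝ) 2
    (r := (1/2:ℝ)) (by rw [Real.norm_eq_abs, abs_of_nonneg (by norm_num : (0:ℝ) ≤ 1/2)]; norm_num)
  have s1 := summable_pow_mul_geometric_of_norm_lt_one (R := ℝ) 1
    (r := (1/2:ℝ)) (by rw [Real.norm_eq_abs, abs_of_nonneg (by norm_num : (0:ℝ) ≤ 1/2)]; norm_num)
  have s0 := summable_pow_mul_geometric_of_norm_lt_one (R := ℝ) 0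
    (r := (1/2:ℝ)) (by rw [Real.norm_eq_abs, abs_of_nonneg (by norm_num : (0:ℝ) ≤ 1/2)]; norm_num)
  have hs : Summable (fun n : ℕ => 3*(1/2:ℝ)^n * (45*(n:ℝ)^2+117*(n:ℝ)+76)) := by
    have := ((s2.mul_left 135).add ((s1.mul_left 351).add (s0.mul_left 228)))
    exact this.congr (fun n => by push_cast; ring)
  exact summable_abs_iff.mp
    (Summable.of_nonneg_of_le (fun n => abs_nonneg _) tt_bound hs)

lemma sum_tele (N : ℕ) : ∑ n ∈ Finset.range N, tt n = (∑' k, FF 0 k) - ∑' k, FF N k := by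
  induction N with
  | zero => simp
  | succ N ih =>
    rw [Finset.sum_range_succ, ih]
    have h1 := RR_step N
    have h2 := GG_zero N
    linarith

theorem stmt_12 :
    HasSum (fun k : ℕ =>
      (15 * ((k + 1 : ℕ) : ℝ) - 4) * (-27 : ℝ) ^ k /
        (((k + 1 : ℕ) : ℝ) ^ 3 * (Nat.choose (2 * (k + 1)) (k + 1) : ℝ) ^ 2 *
          (Nat.choose (3 * (k + 1)) (k + 1) : ℝ)))
      (∑' n : ℕ, (1 / (3 * (n : ℝ) + 1) ^ 2 - 1 / (3 * (n : ℝ) + 2) ^ 2)) := by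
  have htend : Tendsto (fun N => ∑ n ∈ Finset.range N, tt n) atTop (𝓝 (∑' k, FF 0 k)) := by
    simp only [sum_tele]
    simpa using tendsto_const_nhds.sub RR_tendsto
  have h := hasSum_of_tendsto _ _ summable_tt htend
  have hL : (∑' k, FF 0 k) = ∑' n : ℕ, (1 / (3 * (n : ℝ) + 1) ^ 2 - 1 / (3 * (n : ℝ) + 2) ^ 2) :=
    tsum_congr FF_zero
  rw [hL] at h
  exact h
end
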